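/- arXiv:1702.05257 — 9 statements merged into one kernel-verified Lean document; each statement's English description precedes it below -/
import Mathlib

section
/- Let A be a finite abelian group and let S ⊂ A be an inverse-closed subset of A not containing the identity. If S generates A, then the Cayley graph Cay(A;S) is highly distance-balanced. -/
/-!
In an abelian group the map `x ↦ u * v * x⁻¹` is an automorphism of every Cayley graph
(it sends `g⁻¹ * h` to `h⁻¹ * g`), and it interchanges `u` and `v`. Hence it maps `W_{uv}`
bijectively onto `W_{vu}`, so every pair of vertices is balanced, whatever their distance.
-/

open SimpleGraph

/-- The set of vertices strictly closer to `u` than to `v`. -/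
def wSet {V : Type*} (G : SimpleGraph V) (u v : V) : Set V :=
  {w | G.dist u w < G.dist v w}

/-- The pair `u, v` is balanced if `|W_{uv}| = |W_{vu}|`. -/
def IsBalancedPair {V : Type*} (G : SimpleGraph V) (u v : V) : Prop :=
  (wSet G u v).ncard = (wSet G v u).ncard

/-- `G` is `ℓ`-distance-balanced if every pair of vertices at distance `ℓ` is balanced. -/
def IsDistBalanced {V : Type*} (G : SimpleGraph V) (ℓ : ℕ) : Prop :=
  ∀ u v : V, G.dist u v = ℓ → IsBalancedPair G u v

/-- `G` is highly distance-balanced if it is `ℓ`-distance-balanced for all `1 ≤ ℓ ≤ diam`. -/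
def IsHighlyDistBalanced {V : Type*} (G : SimpleGraph V) : Prop :=
  ∀ ℓ : ℕ, 1 ≤ ℓ → ℓ ≤ G.diam → IsDistBalanced G ℓ

/-- The generalized Petersen graph `GP(n,k)`: `Sum.inl i` is the outer vertex `u_i`,
`Sum.inr i` is the inner vertex `v_i`. -/
def GP (n k : ℕ) : SimpleGraph (ZMod n ⊕ ZMod n) :=
  SimpleGraph.fromRel (fun x y =>
    match x, y with
    | Sum.inl i, Sum.inl j => j = i + 1
    | Sum.inr i, Sum.inr j => j = i + (k : ZMod n)
    | Sum.inl i, Sum.inr j => i = j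
    | Sum.inr _, Sum.inl _ => False)

/-- The Cayley graph of a group with connection set `S` (intended for `S = S⁻¹`, `1 ∉ S`). -/
def cayleyGraph {A : Type*} [Group A] (S : Set A) : SimpleGraph A :=
  SimpleGraph.fromRel (fun g h => g⁻¹ * h ∈ S)

namespace SimpleGraph

variable {V W : Type*} {G : SimpleGraph V} {G' : SimpleGraph W}

theorem Iso.dist_map_le (φ : G ≃g G') (u v : V) : G'.dist (φ u) (φ v) ≤ G.dist u v := by
  by_cases h : G.Reachable u v
  · obtain ⟨p, hp⟩ := h.exists_walk_length_eq_dist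
    simpa [hp] using dist_le (p.map φ.toHom)
  · rw [dist_eq_zero_of_not_reachable h,
      dist_eq_zero_of_not_reachable (mt Iso.reachable_iff.mp h)]

theorem Iso.dist_map (φ : G ≃g G') (u v : V) : G'.dist (φ u) (φ v) = G.dist u v :=
  (φ.dist_map_le u v).antisymm (by simpa using φ.symm.dist_map_le (φ u) (φ v))

theorem Iso.image_wSet (φ : G ≃g G') (u v : V) :
    φ '' wSet G u v = wSet G' (φ u) (φ v) := by
  ext w
  obtain ⟨x, rfl⟩ := φ.surjective w
  simp only [φ.injective.mem_set_image, wSet, Set.mem_ofPred_eq, φ.dist_map]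

theorem isBalancedPair_of_iso_swap (φ : G ≃g G) {u v : V} (hu : φ u = v) (hv : φ v = u) :
    IsBalancedPair G u v := by
  rw [IsBalancedPair, ← Set.ncard_image_of_injective _ φ.injective, φ.image_wSet, hu, hv]

end SimpleGraph

namespace cayleyGraph

variable {A : Type*} [CommGroup A]

theorem inv_mul_inv_mul_inv (c a b : A) : (c * a⁻¹)⁻¹ * (c * b⁻¹) = b⁻¹ * a := by
  rw [mul_inv_rev, inv_inv, mul_assoc, inv_mul_cancel_left, mul_comm]

def reflection (S : Set A) (c : A) : cayleyGraph S ≃g cayleyGraph S where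
  toEquiv := (Equiv.inv A).trans (Equiv.mulLeft c)
  map_rel_iff' {a b} := by
    simp only [cayleyGraph, fromRel_adj, Equiv.trans_apply, Equiv.inv_apply,
      Equiv.coe_mulLeft, ne_eq, mul_right_inj, inv_inj, inv_mul_inv_mul_inv, or_comm]

theorem reflection_apply (S : Set A) (c x : A) : reflection S c x = c * x⁻¹ := rfl

theorem isBalancedPair (S : Set A) (u v : A) : IsBalancedPair (cayleyGraph S) u v :=
  isBalancedPair_of_iso_swap (reflection S (u * v))
    (by rw [reflection_apply, mul_inv_cancel_comm])
    (by rw [reflection_apply, mul_inv_cancel_right])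

end cayleyGraph

theorem statement_2_general {A : Type*} [CommGroup A] (S : Set A) :
    IsHighlyDistBalanced (cayleyGraph S) :=
  fun _ _ _ u v _ => cayleyGraph.isBalancedPair S u v

theorem statement_2 {A : Type*} [CommGroup A] [Fintype A] (S : Set A)
    (hSinv : S⁻¹ = S) (hS1 : (1 : A) ∉ S) (hgen : Subgroup.closure S = ⊤) :
    IsHighlyDistBalanced (cayleyGraph S) :=
  statement_2_general S
end

section
/- Let Γ be a connected bipartite finite simple graph which is distance degree regular. Then Γ is 1-distance-balanced and (provided its diameter is at least 2) 2-distance-balanced. -/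
open SimpleGraph

/-!
Summing `d(v,w) - d(u,w)` over all vertices `w` gives zero, since by distance degree regularity
every vertex has the same total distance `∑ᵢ i |Nᵢ(·)|`. If `d(u,v) = ℓ ∈ {1,2}`, then
`|d(v,w) - d(u,w)| ≤ ℓ` and, by bipartiteness, `d(u,w) + d(v,w) ≡ ℓ (mod 2)`; hence the summand is
`ℓ` on `W_{uv}`, `-ℓ` on `W_{vu}` and `0` elsewhere, and the sum is `ℓ (|W_{uv}| - |W_{vu}|)`.
-/

open Finset

namespace SimpleGraph

variable {V : Type*} {G : SimpleGraph V}

theorem Colorable.even_dist_add_dist_add_dist (hG : G.Colorable 2) (hc : G.Preconnected)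
    (u v w : V) : Even (G.dist u v + G.dist v w + G.dist w u) := by
  obtain ⟨p, hp⟩ := (hc u v).exists_walk_length_eq_dist
  obtain ⟨q, hq⟩ := (hc v w).exists_walk_length_eq_dist
  obtain ⟨r, hr⟩ := (hc w u).exists_walk_length_eq_dist
  simpa [hp, hq, hr] using two_colorable_iff_forall_loop_even.mp hG u ((p.append q).append r)

theorem sum_dist_eq_of_ncard_sphere_eq [Fintype V] (hc : G.Connected) {u v : V}
    (h : ∀ i ≤ G.diam, {w | G.dist u w = i}.ncard = {w | G.dist v w = i}.ncard) :
    ∑ w, G.dist u w = ∑ w, G.dist v w := by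
  classical
  have := hc.nonempty
  have hdiam : G.ediam ≠ ⊤ := G.connected_iff_ediam_ne_top.mp hc
  suffices univ.val.map (G.dist u) = univ.val.map (G.dist v) by
    simpa only [sum_eq_multiset_sum] using congrArg Multiset.sum this
  ext i
  simp only [Multiset.count_map]
  rw [← filter_val, ← filter_val, card_val, card_val]
  by_cases hi : i ≤ G.diam
  · simpa only [← Set.ncard_coe_finset, coe_filter_univ, eq_comm] using h i hi
  · have hlt (x w : V) : G.dist x w < i := (dist_le_diam hdiam).trans_lt (not_le.mp hi)
    rw [filter_false_of_mem fun w _ => (hlt u w).ne', filter_false_of_mem fun w _ => (hlt v w).ne']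

theorem isBalancedPair_of_sum_dist_eq [Fintype V] (hG : G.Colorable 2) (hc : G.Preconnected)
    {u v : V} (huv : G.dist u v = 1 ∨ G.dist u v = 2)
    (hsum : ∑ w, G.dist u w = ∑ w, G.dist v w) : IsBalancedPair G u v := by
  classical
  have hterm (w : V) : (G.dist v w : ℤ) - G.dist u w = G.dist u v *
      ((if G.dist u w < G.dist v w then 1 else 0) - (if G.dist v w < G.dist u w then 1 else 0)) := by
    have huw := (hc u v).dist_triangle_left w
    have hvw := (hc v u).dist_triangle_left w
    have hpar := Nat.even_iff.mp (hG.even_dist_add_dist_add_dist hc u v w)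
    rw [dist_comm (u := v) (v := u)] at hvw
    rw [dist_comm (u := w)] at hpar
    rcases huv with h | h <;> rw [h] at huw hvw hpar ⊢ <;> split_ifs <;> omega
  have hzero : ∑ w, ((G.dist v w : ℤ) - G.dist u w) = 0 := by
    rw [sum_sub_distrib, ← Nat.cast_sum, ← Nat.cast_sum, hsum, sub_self]
  simp_rw [hterm, ← mul_sum, sum_sub_distrib, sum_boole] at hzero
  have hℓ : (G.dist u v : ℤ) ≠ 0 := by omega
  simp only [IsBalancedPair, wSet, ← coe_filter_univ, Set.ncard_coe_finset]
  exact_mod_cast sub_eq_zero.mp ((mul_eq_zero.mp hzero).resolve_left hℓ)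

end SimpleGraph

theorem statement_4 {V : Type*} [Fintype V] (G : SimpleGraph V) (hc : G.Connected)
    (hbip : G.Colorable 2)
    (hddr : ∀ u v : V, ∀ i : ℕ, i ≤ G.diam →
      ({w : V | G.dist u w = i}).ncard = ({w : V | G.dist v w = i}).ncard) :
    IsDistBalanced G 1 ∧ (2 ≤ G.diam → IsDistBalanced G 2) := by
  have hsum (u v : V) : ∑ w, G.dist u w = ∑ w, G.dist v w :=
    sum_dist_eq_of_ncard_sphere_eq hc (hddr u v)
  exact ⟨fun u v h => isBalancedPair_of_sum_dist_eq hbip hc.preconnected (.inl h) (hsum u v),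
    fun _ u v h => isBalancedPair_of_sum_dist_eq hbip hc.preconnected (.inr h) (hsum u v)⟩
end

section
/- Let Γ be a connected finite simple graph of diameter 2. Then Γ is highly distance-balanced (i.e. both 1-distance-balanced and 2-distance-balanced) if and only if Γ is regular. -/
open SimpleGraph

/-!
In a graph of diameter at most 2, a vertex `w ≠ u` is closer to `u` than to `v` exactly when
`d(u,w) = 1` and `d(v,w) = 2`, so `W_uv = {u} ∪ (N(u) \ N[v])` and
`|W_uv| = deg u + 1 - |N(u) ∩ N[v]|`. The subtracted term is symmetric in `u` and `v`, hence two
distinct vertices form a balanced pair iff they have the same degree. Balanced edges force the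
degree to be constant along edges, hence on the connected graph; conversely regularity balances
every pair of distinct vertices.
-/

namespace SimpleGraph

variable {V : Type*} {G : SimpleGraph V}

theorem Reachable.eq_of_forall_adj {α : Type*} {f : V → α} (hf : ∀ x y, G.Adj x y → f x = f y)
    {u v : V} (h : G.Reachable u v) : f u = f v := by
  obtain ⟨p⟩ := h
  induction p with
  | nil => rfl
  | cons hadj _ ih => exact (hf _ _ hadj).trans ih

theorem dist_le_two_of_ediam_le_two (hG : G.ediam ≤ 2) (u v : V) : G.dist u v ≤ 2 :=
  ENat.toNat_le_of_le_natCast (G.edist_le_ediam.trans hG)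

variable [Finite V] in
theorem ncard_neighborSet_inter_insert_comm (u v : V) :
    (G.neighborSet u ∩ insert v (G.neighborSet v)).ncard
      = (G.neighborSet v ∩ insert u (G.neighborSet u)).ncard := by
  by_cases hadj : G.Adj u v
  · rw [Set.inter_insert_of_mem (s := G.neighborSet u) hadj,
      Set.inter_insert_of_mem (s := G.neighborSet v) hadj.symm, Set.inter_comm,
      Set.ncard_insert_of_notMem (by simp), Set.ncard_insert_of_notMem (by simp)]
  · rw [Set.inter_insert_of_notMem (s := G.neighborSet u) hadj,
      Set.inter_insert_of_notMem (s := G.neighborSet v) (mt G.adj_symm hadj),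
      Set.inter_comm]

end SimpleGraph

section DiameterTwo

variable {V : Type*} {G : SimpleGraph V}

theorem wSet_eq_insert_of_ediam_le_two (hG : G.ediam ≤ 2) {u v : V} (huv : u ≠ v) :
    wSet G u v = insert u (G.neighborSet u \ insert v (G.neighborSet v)) := by
  have hpre : G.Preconnected := preconnected_of_ediam_ne_top (ne_top_of_le_ne_top (by decide) hG)
  ext w
  have hu0 := (hpre u w).dist_eq_zero_iff
  have hv0 := (hpre v w).dist_eq_zero_iff
  have hu1 : G.dist u w = 1 ↔ G.Adj u w := dist_eq_one_iff_adj
  have hv1 : G.dist v w = 1 ↔ G.Adj v w := dist_eq_one_iff_adj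
  have hu2 := dist_le_two_of_ediam_le_two hG u w
  have hv2 := dist_le_two_of_ediam_le_two hG v w
  -- both distances lie in `{0, 1, 2}`, so `d(u,w) < d(v,w)` means `w = u` or `(1, 2)`
  simp only [wSet, Set.mem_ofPred_eq, Set.mem_insert_iff, Set.mem_sdiff, mem_neighborSet]
  grind

variable [Finite V]

theorem ncard_wSet_add_ncard_neighborSet_inter (hG : G.ediam ≤ 2) {u v : V} (huv : u ≠ v) :
    (wSet G u v).ncard + (G.neighborSet u ∩ insert v (G.neighborSet v)).ncard
      = (G.neighborSet u).ncard + 1 := by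
  rw [wSet_eq_insert_of_ediam_le_two hG huv, Set.ncard_insert_of_notMem (by simp),
    ← Set.ncard_inter_add_ncard_sdiff_eq_ncard (G.neighborSet u) (insert v (G.neighborSet v))]
  omega

theorem isBalancedPair_iff_ncard_neighborSet_eq (hG : G.ediam ≤ 2) {u v : V} (huv : u ≠ v) :
    IsBalancedPair G u v ↔ (G.neighborSet u).ncard = (G.neighborSet v).ncard := by
  have hu := ncard_wSet_add_ncard_neighborSet_inter hG huv
  have hv := ncard_wSet_add_ncard_neighborSet_inter hG huv.symm
  rw [ncard_neighborSet_inter_insert_comm] at hv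
  unfold IsBalancedPair
  omega

end DiameterTwo

theorem statement_8_general {V : Type*} [Fintype V] (G : SimpleGraph V)
    (hdiam : G.diam = 2) :
    IsHighlyDistBalanced G ↔ ∃ r : ℕ, ∀ v : V, (G.neighborSet v).ncard = r := by
  have hfin : G.ediam ≠ ⊤ := ediam_ne_top_of_diam_ne_zero (by omega)
  have hG : G.ediam ≤ 2 := by
    rw [← ENat.natCast_toNat hfin]
    exact_mod_cast hdiam.le
  constructor
  · intro h
    obtain ⟨v₀⟩ := (nontrivial_of_diam_ne_zero (G := G) (by omega)).to_nonempty
    refine ⟨(G.neighborSet v₀).ncard, fun v ↦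
      (preconnected_of_ediam_ne_top hfin v v₀).eq_of_forall_adj
        (f := fun x ↦ (G.neighborSet x).ncard) fun x y hxy ↦ ?_⟩
    exact (isBalancedPair_iff_ncard_neighborSet_eq hG hxy.ne).1
      (h 1 le_rfl (by omega) x y (dist_eq_one_iff_adj.2 hxy))
  · rintro ⟨r, hr⟩ ℓ hℓ - u v huv
    have hne : u ≠ v := by
      rintro rfl
      rw [dist_self] at huv
      omega
    exact (isBalancedPair_iff_ncard_neighborSet_eq hG hne).2 ((hr u).trans (hr v).symm)

theorem statement_8 {V : Type*} [Fintype V] (G : SimpleGraph V) (hc : G.Connected)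
    (hdiam : G.diam = 2) :
    IsHighlyDistBalanced G ↔ ∃ r : ℕ, ∀ v : V, (G.neighborSet v).ncard = r :=
  statement_8_general G hdiam
end

section
/- Let Γ be a connected finite simple graph of diameter 2. Then Γ is 2-distance-balanced but not 1-distance-balanced if and only if Γ is a nonregular join of at least two regular graphs, that is, Γ = Γ₁ + Γ₂ + ··· + Γ_t where t ≥ 2, each Γ_i is regular, and Γ itself is not regular. -/
open SimpleGraph

/-!
In a graph of diameter 2, a vertex `w ∉ {u, v}` is closer to `u` than to `v` exactly when it is a
neighbour of `u` but not of `v`. Counting, `|W_{uv}| + |N(u) ∩ N(v)| + [u ∼ v] = deg u + 1`, and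
the last two terms are symmetric in `u, v`, so a pair is balanced iff its two vertices have the
same degree. Hence `G` is 1-distance-balanced iff it is regular (it is connected), and
2-distance-balanced iff any two vertices of different degrees are adjacent, i.e. iff the degree
classes form the parts of a join. In a join the degree of `v` is its degree inside its part plus
the size of the complement of its part, so the parts are regular exactly when the vertices of each
part share a degree.
-/

section

open Finset

lemma SimpleGraph.Connected.eq_of_forall_adj_eq {V α : Type*} {G : SimpleGraph V} {f : V → α}
    (hc : G.Connected) (hf : ∀ u v, G.Adj u v → f u = f v) (u v : V) : f u = f v := by
  obtain ⟨p⟩ := hc u v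
  induction p with
  | nil => rfl
  | cons hadj _ ih => exact (hf _ _ hadj).trans ih

lemma ncard_neighborSet_eq_degree {V : Type*} (G : SimpleGraph V) [Fintype V] [DecidableRel G.Adj]
    (v : V) : (G.neighborSet v).ncard = G.degree v := by
  rw [← Nat.card_coe_set_eq, Nat.card_eq_fintype_card, card_neighborSet_eq_degree]

lemma exists_surjective_fin_eq_iff {V α : Type*} [Fintype V] [DecidableEq α] (f : V → α) :
    ∃ (t : ℕ) (P : V → Fin t), Function.Surjective P ∧ ∀ u v, P u = P v ↔ f u = f v := by
  let D := univ.image f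
  let toD : V → D := fun v => ⟨f v, mem_image_of_mem f (mem_univ v)⟩
  have hsurj : Function.Surjective toD := by
    rintro ⟨x, hx⟩
    obtain ⟨v, -, rfl⟩ := mem_image.mp hx
    exact ⟨v, rfl⟩
  refine ⟨#D, D.equivFin ∘ toD, D.equivFin.surjective.comp hsurj, fun u v => ?_⟩
  simp only [Function.comp_apply, D.equivFin.apply_eq_iff_eq, toD, Subtype.mk.injEq]

section DiameterTwo

variable {V : Type*} {G : SimpleGraph V}

lemma dist_le_two_of_diam_eq_two (hdiam : G.diam = 2) (u v : V) : G.dist u v ≤ 2 :=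
  hdiam ▸ G.dist_le_diam (G.ediam_ne_top_of_diam_ne_zero (by omega))

lemma dist_eq_two_iff_of_diam_eq_two (hc : G.Connected) (hdiam : G.diam = 2) {u v : V} :
    G.dist u v = 2 ↔ u ≠ v ∧ ¬G.Adj u v := by
  have := dist_le_two_of_diam_eq_two hdiam u v
  rw [ne_eq, ← hc.dist_eq_zero_iff, ← dist_eq_one_iff_adj]
  omega

lemma mem_wSet_iff_of_diam_eq_two (hc : G.Connected) (hdiam : G.diam = 2) {u v w : V}
    (huv : u ≠ v) : w ∈ wSet G u v ↔ w = u ∨ G.Adj u w ∧ w ≠ v ∧ ¬G.Adj v w := by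
  obtain rfl | hwu := eq_or_ne w u
  · simpa [wSet, pos_iff_ne_zero, hc.dist_eq_zero_iff] using huv.symm
  obtain rfl | hwv := eq_or_ne w v
  · simpa [wSet] using hwu
  have hu_pos := hc.dist_eq_zero_iff.not.mpr hwu.symm
  have hv_pos := hc.dist_eq_zero_iff.not.mpr hwv.symm
  have := dist_le_two_of_diam_eq_two hdiam u w
  have := dist_le_two_of_diam_eq_two hdiam v w
  simp only [wSet, Set.mem_ofPred_eq, hwu, hwv, ne_eq, not_false_eq_true, false_or, true_and,
    ← dist_eq_one_iff_adj]
  omega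

lemma wSet_eq_of_diam_eq_two [Fintype V] [DecidableEq V] [DecidableRel G.Adj]
    (hc : G.Connected) (hdiam : G.diam = 2) {u v : V} (huv : u ≠ v) :
    wSet G u v = ↑(insert u (G.neighborFinset u \ insert v (G.neighborFinset v))) := by
  ext w
  simp [mem_wSet_iff_of_diam_eq_two hc hdiam huv]

variable [Fintype V]

lemma ncard_wSet_add_of_diam_eq_two [DecidableEq V] [DecidableRel G.Adj] (hc : G.Connected)
    (hdiam : G.diam = 2) {u v : V} (huv : u ≠ v) :
    (wSet G u v).ncard + #(G.neighborFinset u ∩ G.neighborFinset v) + (if G.Adj u v then 1 else 0)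
      = G.degree u + 1 := by
  have hu : u ∉ G.neighborFinset u \ insert v (G.neighborFinset v) := by simp
  have hinter : #(G.neighborFinset u ∩ insert v (G.neighborFinset v))
      = #(G.neighborFinset u ∩ G.neighborFinset v) + (if G.Adj u v then 1 else 0) := by
    split_ifs with hadj
    · rw [inter_insert_of_mem (by simpa using hadj), card_insert_of_notMem (by simp)]
    · rw [inter_insert_of_notMem (by simpa using hadj), add_zero]
  rw [wSet_eq_of_diam_eq_two hc hdiam huv, Set.ncard_coe_finset, card_insert_of_notMem hu,
    ← card_neighborFinset_eq_degree,
    ← card_sdiff_add_card_inter (G.neighborFinset u) (insert v (G.neighborFinset v)), hinter]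
  ring

lemma isBalancedPair_iff_degree_eq [DecidableRel G.Adj] (hc : G.Connected) (hdiam : G.diam = 2)
    {u v : V} (huv : u ≠ v) : IsBalancedPair G u v ↔ G.degree u = G.degree v := by
  classical
  have hu := ncard_wSet_add_of_diam_eq_two hc hdiam huv
  have hv := ncard_wSet_add_of_diam_eq_two hc hdiam huv.symm
  rw [inter_comm, if_congr (G.adj_comm v u) rfl rfl] at hv
  unfold IsBalancedPair
  omega

lemma isDistBalanced_two_iff [DecidableRel G.Adj] (hc : G.Connected) (hdiam : G.diam = 2) :
    IsDistBalanced G 2 ↔ ∀ u v, u ≠ v → ¬G.Adj u v → G.degree u = G.degree v := by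
  simp only [IsDistBalanced, dist_eq_two_iff_of_diam_eq_two hc hdiam, and_imp]
  exact forall₂_congr fun u v => imp_congr_right fun huv => imp_congr_right fun _ =>
    isBalancedPair_iff_degree_eq hc hdiam huv

lemma isDistBalanced_one_iff_forall_degree_eq [DecidableRel G.Adj] (hc : G.Connected)
    (hdiam : G.diam = 2) :
    IsDistBalanced G 1 ↔ ∀ u v, G.degree u = G.degree v := by
  simp only [IsDistBalanced, dist_eq_one_iff_adj]
  exact ⟨fun h => hc.eq_of_forall_adj_eq fun u v hadj =>
      (isBalancedPair_iff_degree_eq hc hdiam hadj.ne).mp (h u v hadj),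
    fun h u v hadj => (isBalancedPair_iff_degree_eq hc hdiam hadj.ne).mpr (h u v)⟩

end DiameterTwo

section Join

variable {V : Type*} [Fintype V] {G : SimpleGraph V} [DecidableRel G.Adj] {t : ℕ} {P : V → Fin t}

lemma degree_eq_ncard_add_card_of_forall_ne_adj (hcross : ∀ u v, P u ≠ P v → G.Adj u v) (v : V) :
    G.degree v = {w | G.Adj v w ∧ P w = P v}.ncard + #{w | P w ≠ P v} := by
  have hinner : {w | G.Adj v w ∧ P w = P v} = ↑{w ∈ G.neighborFinset v | P w = P v} := by
    ext w
    simp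
  have houter : {w ∈ G.neighborFinset v | ¬P w = P v} = ({w | P w ≠ P v} : Finset V) := by
    ext w
    simpa using fun hw => hcross v w (Ne.symm hw)
  rw [hinner, Set.ncard_coe_finset, ← houter, card_filter_add_card_filter_not,
    card_neighborFinset_eq_degree]

lemma degree_eq_of_part_eq (hcross : ∀ u v, P u ≠ P v → G.Adj u v) {k : Fin t → ℕ}
    (hk : ∀ v, {w | G.Adj v w ∧ P w = P v}.ncard = k (P v)) {u v : V} (huv : P u = P v) :
    G.degree u = G.degree v := by
  rw [degree_eq_ncard_add_card_of_forall_ne_adj hcross,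
    degree_eq_ncard_add_card_of_forall_ne_adj hcross, hk, hk, huv]

lemma exists_regular_join_partition
    (hdeg : ∀ u v, u ≠ v → ¬G.Adj u v → G.degree u = G.degree v)
    (hnreg : ∃ a b, G.degree a ≠ G.degree b) :
    ∃ t, 2 ≤ t ∧ ∃ (P : V → Fin t) (k : Fin t → ℕ), Function.Surjective P ∧
      (∀ u v, P u ≠ P v → G.Adj u v) ∧ ∀ v, {w | G.Adj v w ∧ P w = P v}.ncard = k (P v) := by
  obtain ⟨t, P, hsurj, hP⟩ := exists_surjective_fin_eq_iff fun v => G.degree v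
  obtain ⟨a, b, hab⟩ := hnreg
  have hcross : ∀ u v, P u ≠ P v → G.Adj u v := fun u v hne => by
    rw [Ne, hP] at hne
    by_contra hnadj
    exact hne (hdeg u v (fun huv => hne (huv ▸ rfl)) hnadj)
  have ht : 2 ≤ t := Fin.nontrivial_iff_two_le.mp ⟨P a, P b, by rwa [Ne, hP]⟩
  refine ⟨t, ht, P, fun i => {w | G.Adj (Function.surjInv hsurj i) w ∧ P w = i}.ncard, hsurj,
    hcross, fun v => ?_⟩
  have hrep := Function.surjInv_eq hsurj (P v)
  have hv := degree_eq_ncard_add_card_of_forall_ne_adj hcross v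
  have hrep_deg := degree_eq_ncard_add_card_of_forall_ne_adj hcross (Function.surjInv hsurj (P v))
  rw [hrep, (hP _ _).mp hrep] at hrep_deg
  dsimp only
  omega

end Join

end

theorem statement_9 {V : Type*} [Fintype V] (G : SimpleGraph V) (hc : G.Connected)
    (hdiam : G.diam = 2) :
    (IsDistBalanced G 2 ∧ ¬ IsDistBalanced G 1) ↔
      ((¬ ∃ r : ℕ, ∀ v : V, (G.neighborSet v).ncard = r) ∧
        ∃ (t : ℕ), 2 ≤ t ∧
          ∃ (P : V → Fin t) (k : Fin t → ℕ),
            Function.Surjective P ∧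
            (∀ u v : V, P u ≠ P v → G.Adj u v) ∧
            (∀ v : V, ({w : V | G.Adj v w ∧ P w = P v}).ncard = k (P v))) := by
  classical
  have hregular : (∃ r : ℕ, ∀ v : V, (G.neighborSet v).ncard = r) ↔ IsDistBalanced G 1 := by
    obtain ⟨v₀⟩ := hc.nonempty
    simp only [ncard_neighborSet_eq_degree, isDistBalanced_one_iff_forall_degree_eq hc hdiam]
    exact ⟨fun ⟨r, hr⟩ u v => (hr u).trans (hr v).symm, fun h => ⟨G.degree v₀, (h · v₀)⟩⟩
  rw [hregular, isDistBalanced_two_iff hc hdiam, and_comm]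
  refine and_congr_right fun hnreg => ⟨fun hdeg => ?_, ?_⟩
  · simp only [isDistBalanced_one_iff_forall_degree_eq hc hdiam, not_forall] at hnreg
    exact exists_regular_join_partition hdeg hnreg
  · rintro ⟨t, -, P, k, -, hcross, hk⟩ u v - hnadj
    exact degree_eq_of_part_eq hcross hk (not_imp_comm.mp (hcross u v) hnadj)
end

section
/- Let Γ be a connected bipartite finite simple graph of diameter 3 with bipartition sets X and Y. Then Γ is 1-distance-balanced if and only if either Γ is regular, or Γ is biregular with |N(u)| = |Y|/2 for every u ∈ X and |N(v)| = |X|/2 for every v ∈ Y. -/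
/-!
Let `x ∈ X` and `y ∈ Y` be adjacent. Bipartiteness makes `d(x, w)` and `d(y, w)` of different
parity for every vertex `w`, so `W_{xy}` and `W_{yx}` partition the vertex set. As all distances
are at most `3`, a vertex of `X` is closer to `y` than to `x` exactly when it is a neighbour of `y`
other than `x`, and symmetrically; hence `|W_{xy}| = |X| - deg y + deg x`, and the edge is balanced
iff `|X| + 2 deg x = |Y| + 2 deg y`. By connectivity this common value is a constant `C`, and
counting edges from both sides gives `|X| (C - |X|) = |Y| (C - |Y|)`. So either `|X| = |Y|` and
`Γ` is regular, or `C = |X| + |Y|`, which says `2 deg x = |Y|` and `2 deg y = |X|`.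
-/

open SimpleGraph

lemma Nat.eq_or_add_eq_of_mul_self_add_eq {m n S C : ℕ} (hm : m * m + 2 * S = m * C)
    (hn : n * n + 2 * S = n * C) : m = n ∨ m + n = C := by
  have hm' : (m * m + 2 * S : ℤ) = m * C := mod_cast hm
  have hn' : (n * n + 2 * S : ℤ) = n * C := mod_cast hn
  have : ((m : ℤ) - n) * (m + n - C) = 0 := by linear_combination hm' - hn'
  rcases Int.mul_eq_zero.mp this with h | h
  · exact Or.inl (by omega)
  · exact Or.inr (by omega)

lemma Finset.card_mul_self_add_two_mul_sum_eq {ι : Type*} {r : Finset ι} {f : ι → ℕ} {C : ℕ}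
    (h : ∀ x ∈ r, r.card + 2 * f x = C) : r.card * r.card + 2 * ∑ x ∈ r, f x = r.card * C := by
  rw [← Finset.sum_const_nat h, Finset.sum_add_distrib, Finset.mul_sum, Finset.sum_const,
    smul_eq_mul]

lemma compl_wSet {V : Type*} {G : SimpleGraph V} {u v : V}
    (hne : ∀ w, G.dist u w ≠ G.dist v w) : (wSet G u v)ᶜ = wSet G v u := by
  ext w
  have := hne w
  simp only [wSet, Set.mem_compl_iff, Set.mem_ofPred_eq]
  omega

namespace SimpleGraph

variable {V : Type*} {G : SimpleGraph V} {s t : Set V} {u v : V}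

lemma Reachable.apply_eq_of_forall_adj {β : Sort*} {f : V → β}
    (hf : ∀ ⦃a b⦄, G.Adj a b → f a = f b) (h : G.Reachable u v) : f u = f v := by
  obtain ⟨p⟩ := h
  induction p with
  | nil => rfl
  | cons hadj _ ih => exact (hf hadj).trans ih

lemma ncard_neighborSet_eq_degree (v : V) [Fintype (G.neighborSet v)] :
    (G.neighborSet v).ncard = G.degree v := by
  rw [← card_neighborSet_eq_degree, ← Nat.card_coe_set_eq, Nat.card_eq_fintype_card]

namespace IsBipartiteWith

lemma mem_left_iff_notMem_left_of_adj (h : G.IsBipartiteWith s t) (hadj : G.Adj u v) :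
    u ∈ s ↔ v ∉ s := by
  rcases h.mem_of_adj hadj with ⟨hu, hv⟩ | ⟨hu, hv⟩
  · simp [hu, Set.disjoint_right.mp h.disjoint hv]
  · simp [hv, Set.disjoint_right.mp h.disjoint hu]

lemma even_length_iff (h : G.IsBipartiteWith s t) (p : G.Walk u v) :
    Even p.length ↔ (u ∈ s ↔ v ∈ s) := by
  induction p with
  | nil => simp
  | cons hadj p ih =>
    rw [Walk.length_cons, Nat.even_add_one, ih, h.mem_left_iff_notMem_left_of_adj hadj]
    tauto

lemma even_dist_iff (h : G.IsBipartiteWith s t) (hr : G.Reachable u v) :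
    Even (G.dist u v) ↔ (u ∈ s ↔ v ∈ s) := by
  obtain ⟨p, hp⟩ := hr.exists_walk_length_eq_dist
  rw [← hp, h.even_length_iff p]

lemma dist_ne_dist_of_adj (h : G.IsBipartiteWith s t) (hc : G.Preconnected) (hadj : G.Adj u v)
    (w : V) : G.dist u w ≠ G.dist v w := by
  intro heq
  have hu := h.even_dist_iff (hc u w)
  rw [heq, h.even_dist_iff (hc v w), h.mem_left_iff_notMem_left_of_adj hadj] at hu
  tauto

lemma wSet_inter_eq_neighborSet_sdiff (h : G.IsBipartiteWith s t) (hc : G.Preconnected)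
    (hu3 : ∀ w, G.dist u w ≤ 3) (hu : u ∈ s) (hadj : G.Adj u v) :
    wSet G v u ∩ s = G.neighborSet v \ {u} := by
  have hv : v ∉ s := (h.mem_left_iff_notMem_left_of_adj hadj).mp hu
  ext w
  by_cases hw : w ∈ s
  · have huw := h.even_dist_iff (hc u w)
    have hvw := h.even_dist_iff (hc v w)
    simp only [hu, hv, hw, iff_true, iff_false] at huw hvw
    have hwu : w = u ↔ G.dist u w = 0 := by rw [(hc u w).dist_eq_zero_iff, eq_comm]
    have := hu3 w
    simp only [wSet, Set.mem_inter_iff, Set.mem_ofPred_eq, Set.mem_sdiff, mem_neighborSet,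
      Set.mem_singleton_iff, hw, and_true, ← dist_eq_one_iff_adj, hwu]
    rw [Nat.even_iff] at huw hvw
    omega
  · simp only [Set.mem_inter_iff, hw, and_false, Set.mem_sdiff, mem_neighborSet, false_iff,
      not_and]
    exact fun hvw _ => hw (h.mem_of_mem_adj' (h.mem_of_mem_adj hu hadj) hvw.symm)

lemma ncard_wSet_add_ncard_neighborSet [Finite V] (h : G.IsBipartiteWith s t)
    (hst : s ∪ t = Set.univ) (hc : G.Preconnected) (h3 : ∀ a b, G.dist a b ≤ 3) (hu : u ∈ s)
    (hadj : G.Adj u v) :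
    (wSet G u v).ncard + (G.neighborSet v).ncard = s.ncard + (G.neighborSet u).ncard := by
  have hv : v ∈ t := h.mem_of_mem_adj hu hadj
  have hW_s : wSet G u v ∩ s = s \ (G.neighborSet v \ {u}) := by
    rw [← h.wSet_inter_eq_neighborSet_sdiff hc (h3 u) hu hadj, Set.sdiff_inter_self_eq_sdiff,
      ← compl_wSet (h.dist_ne_dist_of_adj hc hadj), Set.inter_comm, Set.sdiff_eq, compl_compl]
  have hW_t : wSet G u v \ s = G.neighborSet u \ {v} := by
    rw [← h.symm.wSet_inter_eq_neighborSet_sdiff hc (h3 v) hv hadj.symm, Set.sdiff_eq,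
      (IsCompl.of_eq h.disjoint.eq_bot hst).compl_eq]
  have hsplit := Set.ncard_inter_add_ncard_sdiff_eq_ncard (wSet G u v) s
  have hNs : G.neighborSet v \ {u} ⊆ s := fun w hw => h.mem_of_mem_adj' hv hw.1.symm
  have hs := Set.ncard_sdiff_add_ncard_of_subset hNs
  have hNv := Set.ncard_sdiff_singleton_add_one (G.mem_neighborSet v u |>.mpr hadj.symm)
  have hNu := Set.ncard_sdiff_singleton_add_one (G.mem_neighborSet u v |>.mpr hadj)
  rw [hW_s, hW_t] at hsplit
  omega

lemma isBalancedPair_iff [Finite V] (h : G.IsBipartiteWith s t) (hst : s ∪ t = Set.univ)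
    (hc : G.Preconnected) (h3 : ∀ a b, G.dist a b ≤ 3) (hu : u ∈ s) (hadj : G.Adj u v) :
    IsBalancedPair G u v ↔
      s.ncard + 2 * (G.neighborSet u).ncard = t.ncard + 2 * (G.neighborSet v).ncard := by
  have huv := h.ncard_wSet_add_ncard_neighborSet hst hc h3 hu hadj
  have hvu := h.symm.ncard_wSet_add_ncard_neighborSet (Set.union_comm s t ▸ hst) hc h3
    (h.mem_of_mem_adj hu hadj) hadj.symm
  unfold IsBalancedPair
  omega

lemma isDistBalanced_one_iff [Finite V] (h : G.IsBipartiteWith s t) (hst : s ∪ t = Set.univ)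
    (hc : G.Preconnected) (h3 : ∀ a b, G.dist a b ≤ 3) :
    IsDistBalanced G 1 ↔ ∀ x ∈ s, ∀ y, G.Adj x y →
      s.ncard + 2 * (G.neighborSet x).ncard = t.ncard + 2 * (G.neighborSet y).ncard := by
  simp only [IsDistBalanced, dist_eq_one_iff_adj]
  refine ⟨fun hb x hx y hxy => (h.isBalancedPair_iff hst hc h3 hx hxy).mp (hb x y hxy),
    fun hb x y hxy => ?_⟩
  rcases (Set.mem_union x s t).mp (hst ▸ Set.mem_univ x) with hx | hx
  · exact (h.isBalancedPair_iff hst hc h3 hx hxy).mpr (hb x hx y hxy)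
  · have hy := h.symm.mem_of_mem_adj hx hxy
    exact Eq.symm <| (h.isBalancedPair_iff hst hc h3 hy hxy.symm).mpr (hb y hy x hxy.symm)

lemma exists_const_of_forall_adj (h : G.IsBipartiteWith s t) (hc : G.Connected)
    (hedge : ∀ x ∈ s, ∀ y, G.Adj x y →
      s.ncard + 2 * (G.neighborSet x).ncard = t.ncard + 2 * (G.neighborSet y).ncard) :
    ∃ C, (∀ x ∈ s, s.ncard + 2 * (G.neighborSet x).ncard = C) ∧
      ∀ y ∈ t, t.ncard + 2 * (G.neighborSet y).ncard = C := by
  classical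
  let g (w : V) : ℕ := (if w ∈ s then s.ncard else t.ncard) + 2 * (G.neighborSet w).ncard
  have hg : ∀ ⦃a b⦄, G.Adj a b → g a = g b := by
    intro a b hab
    by_cases ha : a ∈ s
    · have hb := (h.mem_left_iff_notMem_left_of_adj hab).mp ha
      simpa [g, ha, hb] using hedge a ha b hab
    · have hb := (h.mem_left_iff_notMem_left_of_adj hab.symm).mpr ha
      simpa [g, ha, hb] using (hedge b hb a hab.symm).symm
  obtain ⟨w₀⟩ := hc.nonempty
  refine ⟨g w₀, fun x hx => ?_, fun y hy => ?_⟩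
  · simpa [g, hx] using (hc x w₀).apply_eq_of_forall_adj hg
  · simpa [g, Set.disjoint_right.mp h.disjoint hy] using (hc y w₀).apply_eq_of_forall_adj hg

lemma sum_ncard_neighborSet_eq [Fintype V] [DecidablePred (· ∈ s)] [DecidablePred (· ∈ t)]
    (h : G.IsBipartiteWith s t) :
    ∑ x ∈ s.toFinset, (G.neighborSet x).ncard = ∑ y ∈ t.toFinset, (G.neighborSet y).ncard := by
  classical
  simp only [ncard_neighborSet_eq_degree]
  exact isBipartiteWith_sum_degrees_eq (by rwa [Set.coe_toFinset, Set.coe_toFinset])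

lemma ncard_eq_or_ncard_add_ncard_eq [Finite V] (h : G.IsBipartiteWith s t) {C : ℕ}
    (hs : ∀ x ∈ s, s.ncard + 2 * (G.neighborSet x).ncard = C)
    (ht : ∀ y ∈ t, t.ncard + 2 * (G.neighborSet y).ncard = C) :
    s.ncard = t.ncard ∨ s.ncard + t.ncard = C := by
  classical
  have := Fintype.ofFinite V
  rw [Set.ncard_eq_toFinset_card' s] at hs ⊢
  rw [Set.ncard_eq_toFinset_card' t] at ht ⊢
  refine Nat.eq_or_add_eq_of_mul_self_add_eq
    (Finset.card_mul_self_add_two_mul_sum_eq fun x hx => hs x (Set.mem_toFinset.mp hx)) ?_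
  rw [h.sum_ncard_neighborSet_eq]
  exact Finset.card_mul_self_add_two_mul_sum_eq fun y hy => ht y (Set.mem_toFinset.mp hy)

lemma ncard_eq_of_forall_ncard_neighborSet_eq [Finite V] (h : G.IsBipartiteWith s t) {r : ℕ}
    (hr : ∀ v, (G.neighborSet v).ncard = r) (hpos : 0 < r) : s.ncard = t.ncard := by
  classical
  have := Fintype.ofFinite V
  have hsum := h.sum_ncard_neighborSet_eq
  simp only [hr, Finset.sum_const, smul_eq_mul, ← Set.ncard_eq_toFinset_card'] at hsum
  exact Nat.eq_of_mul_eq_mul_right hpos hsum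

end IsBipartiteWith

end SimpleGraph

theorem statement_10 {V : Type*} [Fintype V] (G : SimpleGraph V) (hc : G.Connected)
    (hdiam : G.diam = 3) (X Y : Set V)
    (hunion : X ∪ Y = Set.univ) (hdisj : Disjoint X Y)
    (hbip : ∀ u v : V, G.Adj u v → ((u ∈ X ∧ v ∈ Y) ∨ (u ∈ Y ∧ v ∈ X))) :
    IsDistBalanced G 1 ↔
      ((∃ r : ℕ, ∀ v : V, (G.neighborSet v).ncard = r) ∨
       (X.ncard ≠ Y.ncard ∧
        (∀ u ∈ X, 2 * (G.neighborSet u).ncard = Y.ncard) ∧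
        (∀ v ∈ Y, 2 * (G.neighborSet v).ncard = X.ncard))) := by
  have hB : G.IsBipartiteWith X Y := ⟨hdisj, fun u v huv => hbip u v huv⟩
  have h3 : ∀ a b, G.dist a b ≤ 3 := fun a b => by
    rw [← hdiam]
    exact dist_le_diam (ediam_ne_top_of_diam_ne_zero (by omega))
  rw [hB.isDistBalanced_one_iff hunion hc.preconnected h3]
  constructor
  · intro hedge
    obtain ⟨C, hX, hY⟩ := hB.exists_const_of_forall_adj hc hedge
    by_cases hXY : X.ncard = Y.ncard
    · refine Or.inl ⟨(C - X.ncard) / 2, fun w => ?_⟩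
      rcases (Set.mem_union w X Y).mp (hunion ▸ Set.mem_univ w) with hw | hw
      · have := hX w hw
        omega
      · have := hY w hw
        omega
    · have hC := (hB.ncard_eq_or_ncard_add_ncard_eq hX hY).resolve_left hXY
      refine Or.inr ⟨hXY, fun x hx => ?_, fun y hy => ?_⟩
      · have := hX x hx
        omega
      · have := hY y hy
        omega
  · rintro (⟨r, hr⟩ | ⟨-, hdX, hdY⟩) x hx y hxy
    · have hpos : 0 < r := hr x ▸ (Set.ncard_pos (Set.toFinite _)).mpr ⟨y, hxy⟩
      rw [hr, hr, hB.ncard_eq_of_forall_ncard_neighborSet_eq hr hpos]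
    · have := hdX x hx
      have := hdY y (hB.mem_of_mem_adj hx hxy)
      omega
end

section
/- Let Γ be a connected bipartite finite simple graph of diameter 3 with bipartition sets X and Y. Then Γ is 2-distance-balanced if and only if any two vertices from the same bipartition set have the same degree. -/
open SimpleGraph

/-! In a bipartite graph of diameter at most 3, two vertices `u, v` at distance 2 lie in the same
part, so for every `w` the distances `d(u,w)` and `d(v,w)` have the same parity, differ by at most 2
and are at most 3. Hence `d(u,w) < d(v,w)` exactly when `w = u` or `w` is a neighbour of `u` but not
of `v`, i.e. `W_{uv} = {u} ∪ (N(u) \ N(v))`, and the pair is balanced iff `deg u = deg v`.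
Finally, two distinct vertices are at distance 2 precisely when they lie in the same part. -/

namespace SimpleGraph

variable {V : Type*} {G : SimpleGraph V} {s t : Set V} {u v : V}

open scoped Classical in
noncomputable def IsBipartiteWith.coloring (h : G.IsBipartiteWith s t) : G.Coloring Bool :=
  Coloring.mk (fun v ↦ decide (v ∈ s)) fun hadj ↦ by
    rcases h.mem_of_adj hadj with ⟨hv, hw⟩ | ⟨hv, hw⟩
    · simp [hv, h.disjoint.notMem_of_mem_right hw]
    · simp [hw, h.disjoint.notMem_of_mem_right hv]

theorem IsBipartiteWith.even_length_iff_s11 (h : G.IsBipartiteWith s t) (p : G.Walk u v) :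
    Even p.length ↔ (u ∈ s ↔ v ∈ s) := by
  simpa [IsBipartiteWith.coloring, Coloring.mk] using h.coloring.even_length_iff_congr p

theorem IsBipartiteWith.even_dist_iff_s11 (h : G.IsBipartiteWith s t) (hG : G.Preconnected)
    (u v : V) : Even (G.dist u v) ↔ (u ∈ s ↔ v ∈ s) := by
  obtain ⟨p, hp⟩ := (hG u v).exists_walk_length_eq_dist
  rw [← hp, h.even_length_iff_s11]

theorem dist_le_of_ediam_le {n : ℕ} (h : G.ediam ≤ n) (u v : V) : G.dist u v ≤ n :=
  ENat.toNat_le_of_le_natCast (edist_le_ediam.trans h)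

theorem preconnected_of_ediam_le {n : ℕ} (h : G.ediam ≤ n) : G.Preconnected :=
  preconnected_of_ediam_ne_top (ne_top_of_le_ne_top (ENat.natCast_ne_top n) h)

theorem IsBipartiteWith.wSet_eq_of_dist_eq_two (h : G.IsBipartiteWith s t) (hdiam : G.ediam ≤ 3)
    (huv : G.dist u v = 2) : wSet G u v = insert u (G.neighborSet u \ G.neighborSet v) := by
  have hG := preconnected_of_ediam_le hdiam
  ext w
  rcases eq_or_ne w u with rfl | hwu
  · rw [dist_comm] at huv
    simp [wSet, huv]
  have hpar : Even (G.dist u w) ↔ Even (G.dist v w) := by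
    have hsame := (h.even_dist_iff_s11 hG u v).mp (huv ▸ even_two)
    rw [h.even_dist_iff_s11 hG, h.even_dist_iff_s11 hG]
    tauto
  have htri : G.dist v w ≤ 2 + G.dist u w := by
    simpa [dist_comm, huv] using (hG v u).dist_triangle_left w
  have hpos : 0 < G.dist u w := (hG u w).pos_dist_of_ne hwu.symm
  have hdu := dist_le_of_ediam_le (n := 3) hdiam u w
  have hdv := dist_le_of_ediam_le (n := 3) hdiam v w
  simp only [wSet, Set.mem_ofPred_eq, Set.mem_insert_iff, hwu, false_or, Set.mem_sdiff,
    mem_neighborSet, ← dist_eq_one_iff_adj]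
  rw [Nat.even_iff, Nat.even_iff] at hpar
  omega

theorem IsBipartiteWith.isBalancedPair_iff_of_dist_eq_two [G.LocallyFinite]
    (h : G.IsBipartiteWith s t) (hdiam : G.ediam ≤ 3) (huv : G.dist u v = 2) :
    IsBalancedPair G u v ↔ (G.neighborSet u).ncard = (G.neighborSet v).ncard := by
  rw [IsBalancedPair, h.wSet_eq_of_dist_eq_two hdiam huv,
    h.wSet_eq_of_dist_eq_two hdiam (dist_comm.trans huv), Set.ncard_insert_of_notMem (by simp),
    Set.ncard_insert_of_notMem (by simp), Set.ncard_eq_ncard_iff_ncard_sdiff_eq_ncard_sdiff,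
    add_left_inj]

theorem IsBipartiteWith.dist_eq_two_iff (h : G.IsBipartiteWith s t) (hdiam : G.ediam ≤ 3) :
    G.dist u v = 2 ↔ u ≠ v ∧ (u ∈ s ↔ v ∈ s) := by
  have hG := preconnected_of_ediam_le hdiam
  rw [← h.even_dist_iff_s11 hG, Nat.even_iff]
  constructor
  · intro huv
    exact ⟨fun h ↦ by simp [h] at huv, by omega⟩
  · rintro ⟨hne, heven⟩
    have hpos := (hG u v).pos_dist_of_ne hne
    have hle := dist_le_of_ediam_le (n := 3) hdiam u v
    omega

theorem IsBipartiteWith.ncard_neighborSet_eq_of_isDistBalanced [G.LocallyFinite]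
    (h : G.IsBipartiteWith s t) (hdiam : G.ediam ≤ 3) (hbal : IsDistBalanced G 2)
    (hu : u ∈ s) (hv : v ∈ s) : (G.neighborSet u).ncard = (G.neighborSet v).ncard := by
  rcases eq_or_ne u v with rfl | hne
  · rfl
  have huv := (h.dist_eq_two_iff hdiam).mpr ⟨hne, iff_of_true hu hv⟩
  exact (h.isBalancedPair_iff_of_dist_eq_two hdiam huv).mp (hbal u v huv)

end SimpleGraph

theorem statement_11_general {V : Type*} [Fintype V] (G : SimpleGraph V)
    (hdiam : G.diam = 3) (X Y : Set V)
    (hunion : X ∪ Y = Set.univ) (hdisj : Disjoint X Y)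
    (hbip : ∀ u v : V, G.Adj u v → ((u ∈ X ∧ v ∈ Y) ∨ (u ∈ Y ∧ v ∈ X))) :
    IsDistBalanced G 2 ↔
      ((∀ u ∈ X, ∀ v ∈ X, (G.neighborSet u).ncard = (G.neighborSet v).ncard) ∧
       (∀ u ∈ Y, ∀ v ∈ Y, (G.neighborSet u).ncard = (G.neighborSet v).ncard)) := by
  classical
  have h : G.IsBipartiteWith X Y := ⟨hdisj, hbip⟩
  have hediam : G.ediam ≤ 3 := by
    rw [← ENat.natCast_toNat (ediam_ne_top_of_diam_ne_zero (by omega)), ← diam, hdiam]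
    rfl
  constructor
  · intro hbal
    exact ⟨fun u hu v hv ↦ h.ncard_neighborSet_eq_of_isDistBalanced hediam hbal hu hv,
      fun u hu v hv ↦ h.symm.ncard_neighborSet_eq_of_isDistBalanced hediam hbal hu hv⟩
  · rintro ⟨hX, hY⟩ u v huv
    rw [h.isBalancedPair_iff_of_dist_eq_two hediam huv]
    rcases Set.eq_univ_iff_forall.mp hunion u with hu | hu
    · exact hX u hu v (((h.dist_eq_two_iff hediam).mp huv).2.mp hu)
    · exact hY u hu v (((h.symm.dist_eq_two_iff hediam).mp huv).2.mp hu)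

theorem statement_11 {V : Type*} [Fintype V] (G : SimpleGraph V) (hc : G.Connected)
    (hdiam : G.diam = 3) (X Y : Set V)
    (hunion : X ∪ Y = Set.univ) (hdisj : Disjoint X Y)
    (hbip : ∀ u v : V, G.Adj u v → ((u ∈ X ∧ v ∈ Y) ∨ (u ∈ Y ∧ v ∈ X))) :
    IsDistBalanced G 2 ↔
      ((∀ u ∈ X, ∀ v ∈ X, (G.neighborSet u).ncard = (G.neighborSet v).ncard) ∧
       (∀ u ∈ Y, ∀ v ∈ Y, (G.neighborSet u).ncard = (G.neighborSet v).ncard)) :=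
  statement_11_general G hdiam X Y hunion hdisj hbip
end

section
/- Let Γ be a connected bipartite finite simple graph of diameter 3 with bipartition sets X and Y. Then Γ is 3-distance-balanced if and only if for every pair of vertices u ∈ X and v ∈ Y with d(u,v) = 3 the equality 2|N(u)| + |X| = 2|N(v)| + |Y| holds. -/
/-!
Let `u ∈ X`, `v ∈ Y` with `d(u,v) = 3`. In a connected bipartite graph the parity of `d(u,w)` tells
which side `w` lies on, and all distances are at most `3`. Together with `d(u,w) + d(w,v) ≥ 3`
this leaves only two ways for `w` to be closer to `u`: `w ∈ X` not adjacent to `v`, or `w`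
adjacent to `u`. Hence `|W_{uv}| = |X| - |N(v)| + |N(u)|`, symmetrically
`|W_{vu}| = |Y| - |N(u)| + |N(v)|`, and the pair is balanced iff `2|N(u)| + |X| = 2|N(v)| + |Y|`.
-/

open SimpleGraph

namespace SimpleGraph

variable {V : Type*} {G : SimpleGraph V} {X Y : Set V}

theorem IsBipartiteWith.mem_of_walk (hG : G.IsBipartiteWith X Y) {a b : V} (p : G.Walk a b)
    (ha : a ∈ X) : (Even p.length → b ∈ X) ∧ (Odd p.length → b ∈ Y) := by
  induction p generalizing X Y with
  | nil => exact ⟨fun _ => ha, fun h => absurd h (by simp)⟩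
  | cons hadj q ih =>
    obtain ⟨hEven, hOdd⟩ := ih hG.symm (hG.mem_of_mem_adj ha hadj)
    simp only [Walk.length_cons, Nat.even_add_one, Nat.odd_add_one, Nat.not_even_iff_odd,
      Nat.not_odd_iff_even]
    exact ⟨hOdd, hEven⟩

theorem IsBipartiteWith.even_dist_iff_s12 (hG : G.IsBipartiteWith X Y) (hc : G.Connected)
    {a : V} (ha : a ∈ X) (b : V) : Even (G.dist a b) ↔ b ∈ X := by
  obtain ⟨p, hp⟩ := hc.exists_walk_length_eq_dist a b
  refine ⟨fun h => (hG.mem_of_walk p ha).1 (hp ▸ h), fun hb => ?_⟩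
  by_contra h
  have hbY := (hG.mem_of_walk p ha).2 (hp ▸ Nat.not_even_iff_odd.mp h)
  exact Set.disjoint_left.mp hG.disjoint hb hbY

theorem IsBipartiteWith.odd_dist_iff (hG : G.IsBipartiteWith X Y) (hc : G.Connected)
    {a : V} (ha : a ∈ X) (b : V) : Odd (G.dist a b) ↔ b ∈ Y := by
  obtain ⟨p, hp⟩ := hc.exists_walk_length_eq_dist a b
  refine ⟨fun h => (hG.mem_of_walk p ha).2 (hp ▸ h), fun hb => ?_⟩
  rw [← Nat.not_even_iff_odd, hG.even_dist_iff_s12 hc ha]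
  exact Set.disjoint_right.mp hG.disjoint hb

section DistThree

variable (hG : G.IsBipartiteWith X Y) (hc : G.Connected) (hle : ∀ a b : V, G.dist a b ≤ 3)
  {u v : V} (hu : u ∈ X) (hv : v ∈ Y) (huv : G.dist u v = 3)
include hG hc hle hu hv huv

theorem wSet_eq_of_dist_eq_three :
    wSet G u v = (X \ G.neighborSet v) ∪ G.neighborSet u := by
  ext w
  have htri : G.dist u v ≤ G.dist u w + G.dist w v := hc.dist_triangle
  rw [dist_comm (u := w)] at htri
  have hu3 := hle u w
  have hv3 := hle v w
  simp only [wSet, Set.mem_ofPred_eq, Set.mem_union, Set.mem_sdiff, mem_neighborSet,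
    ← dist_eq_one_iff_adj]
  by_cases hw : w ∈ X
  · have hwY : w ∉ Y := Set.disjoint_left.mp hG.disjoint hw
    have heu := (hG.even_dist_iff_s12 hc hu w).mpr hw
    have hov : ¬Even (G.dist v w) := fun h => hwY ((hG.symm.even_dist_iff_s12 hc hv w).mp h)
    rw [Nat.even_iff] at heu hov
    simp only [hw, true_and]
    omega
  · have hou : ¬Even (G.dist u w) := fun h => hw ((hG.even_dist_iff_s12 hc hu w).mp h)
    have hwY := (hG.odd_dist_iff hc hu w).mp (Nat.not_even_iff_odd.mp hou)
    have hev := (hG.symm.even_dist_iff_s12 hc hv w).mpr hwY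
    rw [Nat.even_iff] at hou hev
    simp only [hw, false_and, false_or]
    omega

theorem ncard_wSet_add_ncard_neighborSet_of_dist_eq_three [Finite V] :
    (wSet G u v).ncard + (G.neighborSet v).ncard = X.ncard + (G.neighborSet u).ncard := by
  have hNv : G.neighborSet v ⊆ X := isBipartiteWith_neighborSet_subset' hG hv
  have hNu : Disjoint (X \ G.neighborSet v) (G.neighborSet u) :=
    (isBipartiteWith_neighborSet_disjoint hG hu).symm.mono_left Set.sdiff_subset
  rw [wSet_eq_of_dist_eq_three hG hc hle hu hv huv, Set.ncard_union_eq hNu,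
    add_right_comm, Set.ncard_sdiff_add_ncard_of_subset hNv]

theorem isBalancedPair_iff_of_dist_eq_three [Finite V] :
    IsBalancedPair G u v ↔
      2 * (G.neighborSet u).ncard + X.ncard = 2 * (G.neighborSet v).ncard + Y.ncard := by
  have hW := ncard_wSet_add_ncard_neighborSet_of_dist_eq_three hG hc hle hu hv huv
  have hW' := ncard_wSet_add_ncard_neighborSet_of_dist_eq_three hG.symm hc hle hv hu
    (dist_comm.trans huv)
  unfold IsBalancedPair
  omega

end DistThree

end SimpleGraph

theorem statement_12_general {V : Type*} [Fintype V] (G : SimpleGraph V) (hc : G.Connected)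
    (hdiam : G.diam = 3) (X Y : Set V)
    (hdisj : Disjoint X Y)
    (hbip : ∀ u v : V, G.Adj u v → ((u ∈ X ∧ v ∈ Y) ∨ (u ∈ Y ∧ v ∈ X))) :
    IsDistBalanced G 3 ↔
      (∀ u ∈ X, ∀ v ∈ Y, G.dist u v = 3 →
        2 * (G.neighborSet u).ncard + X.ncard = 2 * (G.neighborSet v).ncard + Y.ncard) := by
  have hG : G.IsBipartiteWith X Y := ⟨hdisj, fun u v h => hbip u v h⟩
  have hle (a b : V) : G.dist a b ≤ 3 :=
    hdiam ▸ dist_le_diam (ediam_ne_top_of_diam_ne_zero (by omega))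
  refine ⟨fun hbal u hu v hv huv =>
    (isBalancedPair_iff_of_dist_eq_three hG hc hle hu hv huv).mp (hbal u v huv), ?_⟩
  intro h u v huv
  have huv' : u ≠ v := fun h => by simp [h] at huv
  rcases isBipartiteWith_support_subset hG (mem_support_of_reachable huv' (hc u v)) with hu | hu
  · have hv := (hG.odd_dist_iff hc hu v).mp (huv ▸ by decide)
    exact (isBalancedPair_iff_of_dist_eq_three hG hc hle hu hv huv).mpr (h u hu v hv huv)
  · have hv := (hG.symm.odd_dist_iff hc hu v).mp (huv ▸ by decide)
    have hvu : G.dist v u = 3 := dist_comm.trans huv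
    exact ((isBalancedPair_iff_of_dist_eq_three hG hc hle hv hu hvu).mpr (h v hv u hu hvu)).symm

theorem statement_12 {V : Type*} [Fintype V] (G : SimpleGraph V) (hc : G.Connected)
    (hdiam : G.diam = 3) (X Y : Set V)
    (hunion : X ∪ Y = Set.univ) (hdisj : Disjoint X Y)
    (hbip : ∀ u v : V, G.Adj u v → ((u ∈ X ∧ v ∈ Y) ∨ (u ∈ Y ∧ v ∈ X))) :
    IsDistBalanced G 3 ↔
      (∀ u ∈ X, ∀ v ∈ Y, G.dist u v = 3 →
        2 * (G.neighborSet u).ncard + X.ncard = 2 * (G.neighborSet v).ncard + Y.ncard) :=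
  statement_12_general G hc hdiam X Y hdisj hbip
end

section
/- Let Γ be a connected bipartite finite simple graph of diameter 3. Then: (a) if Γ is 1-distance-balanced then Γ is also 2-distance-balanced and 3-distance-balanced; and (b) if Γ is both 2-distance-balanced and 3-distance-balanced then Γ is 1-distance-balanced. Consequently, exactly one of the following holds: Γ is highly distance-balanced; Γ is 2-distance-balanced but neither 1- nor 3-distance-balanced; Γ is 3-distance-balanced but neither 1- nor 2-distance-balanced; Γ is not ℓ-distance-balanced for any 1 ≤ ℓ ≤ 3. -/
open SimpleGraph

/-! In a connected bipartite graph the colour class of `x` is `{w | Even (dist x w)}`. When the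
diameter is at most 3, parity and adjacency pin down `dist u w` and `dist v w`, which makes
`W_uv` explicit: for `dist u v` odd, `|W_uv| = |X_u| + deg u - deg v` with `X_u` the colour class
of `u`; for `dist u v = 2`, `|W_uv| - |W_vu| = deg u - deg v`. Either way `u, v` are balanced iff
the index `|X_x| + 2 deg x` takes the same value at `u` and `v`. So 1-distance-balance makes the
index constant along edges, hence constant; 2-distance-balance makes it constant on each colour
class (distinct vertices of one class are at distance 2), and a single pair at distance 3 joins
the two classes. -/

namespace SimpleGraph

variable {V : Type*} {G : SimpleGraph V}

theorem Connected.even_dist_iff_of_colorable_two (hc : G.Connected) (hb : G.Colorable 2)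
    (u v w : V) : Even (G.dist u w) ↔ (Even (G.dist u v) ↔ Even (G.dist v w)) := by
  let C : G.Coloring Bool := hb.toColoring (by simp)
  have hparity (x y : V) : Even (G.dist x y) ↔ (C x ↔ C y) := by
    obtain ⟨p, hp⟩ := hc.exists_walk_length_eq_dist x y
    rw [← hp]
    exact C.even_length_iff_congr p
  rw [hparity, hparity, hparity]
  tauto

theorem ncard_neighborSet_sdiff_add_ncard [Finite V] (u v : V) :
    (G.neighborSet u \ {v}).ncard + (G.neighborSet v).ncard =
      (G.neighborSet v \ {u}).ncard + (G.neighborSet u).ncard := by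
  by_cases h : G.Adj u v
  · rw [← Set.ncard_sdiff_singleton_add_one ((G.mem_neighborSet u v).mpr h),
      ← Set.ncard_sdiff_singleton_add_one ((G.mem_neighborSet v u).mpr h.symm)]
    ring
  · rw [Set.sdiff_singleton_eq_self (mt (G.mem_neighborSet u v).mp h),
      Set.sdiff_singleton_eq_self (mt (G.mem_neighborSet v u).mp (mt G.adj_symm h)), add_comm]

theorem wSet_eq_of_odd_dist [Finite V] (hc : G.Connected) (hb : G.Colorable 2)
    (hdist : ∀ x y, G.dist x y ≤ 3) {u v : V} (hodd : Odd (G.dist u v)) :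
    wSet G u v = {w | Even (G.dist u w)} \ (G.neighborSet v \ {u}) ∪ (G.neighborSet u \ {v}) := by
  ext w
  have hpar := hc.even_dist_iff_of_colorable_two hb u v w
  have hwu : w = u ↔ G.dist u w = 0 := by rw [hc.dist_eq_zero_iff, eq_comm]
  have hwv : w = v ↔ G.dist v w = 0 := by rw [hc.dist_eq_zero_iff, eq_comm]
  have := hdist u w
  have := hdist v w
  simp only [wSet, Set.mem_union, Set.mem_sdiff, Set.mem_ofPred_eq, mem_neighborSet,
    Set.mem_singleton_iff, ← dist_eq_one_iff_adj, hwu, hwv]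
  simp only [Nat.even_iff] at hpar ⊢
  rw [Nat.odd_iff] at hodd
  omega

theorem wSet_eq_of_dist_eq_two [Finite V] (hc : G.Connected) (hb : G.Colorable 2)
    (hdist : ∀ x y, G.dist x y ≤ 3) {u v : V} (h2 : G.dist u v = 2) :
    wSet G u v = {u} ∪ (G.neighborSet u \ G.neighborSet v) := by
  ext w
  have hpar := hc.even_dist_iff_of_colorable_two hb u v w
  have hwu : w = u ↔ G.dist u w = 0 := by rw [hc.dist_eq_zero_iff, eq_comm]
  have htri : G.dist u v ≤ G.dist u w + G.dist w v := hc.dist_triangle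
  have hsymm : G.dist w v = G.dist v w := dist_comm
  have := hdist u w
  have := hdist v w
  simp only [wSet, Set.mem_union, Set.mem_sdiff, Set.mem_ofPred_eq, mem_neighborSet,
    Set.mem_singleton_iff, ← dist_eq_one_iff_adj, hwu]
  simp only [Nat.even_iff] at hpar
  omega

theorem ncard_wSet_add_of_odd_dist [Finite V] (hc : G.Connected) (hb : G.Colorable 2)
    (hdist : ∀ x y, G.dist x y ≤ 3) {u v : V} (hodd : Odd (G.dist u v)) :
    (wSet G u v).ncard + (G.neighborSet v \ {u}).ncard =
      {w | Even (G.dist u w)}.ncard + (G.neighborSet u \ {v}).ncard := by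
  have hsub : G.neighborSet v \ {u} ⊆ {w | Even (G.dist u w)} := by
    rintro w ⟨hvw, -⟩
    rw [Set.mem_ofPred_eq, hc.even_dist_iff_of_colorable_two hb u v w,
      dist_eq_one_iff_adj.mpr hvw]
    simpa using hodd
  have hdisj : Disjoint ({w | Even (G.dist u w)} \ (G.neighborSet v \ {u}))
      (G.neighborSet u \ {v}) := by
    refine Set.disjoint_left.mpr fun w ⟨heven, _⟩ ⟨huw, _⟩ => ?_
    rw [Set.mem_ofPred_eq, dist_eq_one_iff_adj.mpr huw] at heven
    exact Nat.not_even_one heven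
  rw [wSet_eq_of_odd_dist hc hb hdist hodd, Set.ncard_union_eq hdisj]
  have := Set.ncard_sdiff_add_ncard_of_subset hsub
  omega

theorem ncard_wSet_add_of_dist_eq_two [Finite V] (hc : G.Connected) (hb : G.Colorable 2)
    (hdist : ∀ x y, G.dist x y ≤ 3) {u v : V} (h2 : G.dist u v = 2) :
    (wSet G u v).ncard + (G.neighborSet u ∩ G.neighborSet v).ncard =
      1 + (G.neighborSet u).ncard := by
  have hdisj : Disjoint {u} (G.neighborSet u \ G.neighborSet v) :=
    Set.disjoint_singleton_left.mpr fun h => G.irrefl h.1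
  rw [wSet_eq_of_dist_eq_two hc hb hdist h2, Set.ncard_union_eq hdisj, Set.ncard_singleton]
  have := Set.ncard_inter_add_ncard_sdiff_eq_ncard (G.neighborSet u) (G.neighborSet v)
  omega

noncomputable def balanceIndex (G : SimpleGraph V) (x : V) : ℕ :=
  {w | Even (G.dist x w)}.ncard + 2 * (G.neighborSet x).ncard

theorem isBalancedPair_iff_balanceIndex_eq [Finite V] (hc : G.Connected) (hb : G.Colorable 2)
    (hdist : ∀ x y, G.dist x y ≤ 3) {u v : V} (huv : u ≠ v) :
    IsBalancedPair G u v ↔ G.balanceIndex u = G.balanceIndex v := by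
  have hvu : G.dist v u = G.dist u v := dist_comm
  unfold IsBalancedPair balanceIndex
  rcases Nat.even_or_odd (G.dist u v) with heven | hodd
  · have h2 : G.dist u v = 2 := by
      have := hdist u v
      have := hc.pos_dist_of_ne huv
      rw [Nat.even_iff] at heven
      omega
    have hparts : {w | Even (G.dist u w)} = {w | Even (G.dist v w)} := by
      ext w
      simp [hc.even_dist_iff_of_colorable_two hb u v w, heven]
    have e1 := ncard_wSet_add_of_dist_eq_two hc hb hdist h2
    have e2 := ncard_wSet_add_of_dist_eq_two hc hb hdist (hvu.trans h2)
    rw [Set.inter_comm] at e2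
    rw [hparts]
    omega
  · have e1 := ncard_wSet_add_of_odd_dist hc hb hdist hodd
    have e2 := ncard_wSet_add_of_odd_dist hc hb hdist (hvu ▸ hodd)
    have e3 := G.ncard_neighborSet_sdiff_add_ncard u v
    omega

theorem isDistBalanced_iff_balanceIndex_eq [Finite V] (hc : G.Connected) (hb : G.Colorable 2)
    (hdist : ∀ x y, G.dist x y ≤ 3) {ℓ : ℕ} (hℓ : ℓ ≠ 0) :
    IsDistBalanced G ℓ ↔ ∀ u v, G.dist u v = ℓ → G.balanceIndex u = G.balanceIndex v := by
  refine forall₂_congr fun u v => imp_congr_right fun huv => ?_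
  refine isBalancedPair_iff_balanceIndex_eq hc hb hdist fun h => hℓ ?_
  rw [← huv, h, dist_self]

theorem balanceIndex_eq_of_isDistBalanced_one [Finite V] (hc : G.Connected)
    (hb : G.Colorable 2) (hdist : ∀ x y, G.dist x y ≤ 3) (h1 : IsDistBalanced G 1) (u v : V) :
    G.balanceIndex u = G.balanceIndex v := by
  have hadj (x y : V) (hxy : G.Adj x y) : G.balanceIndex x = G.balanceIndex y :=
    (isDistBalanced_iff_balanceIndex_eq hc hb hdist one_ne_zero).mp h1 x y
      (dist_eq_one_iff_adj.mpr hxy)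
  obtain ⟨p⟩ := hc.preconnected u v
  induction p with
  | nil => rfl
  | cons h _ ih => exact (hadj _ _ h).trans ih

theorem balanceIndex_eq_of_even_dist [Finite V] (hc : G.Connected) (hb : G.Colorable 2)
    (hdist : ∀ x y, G.dist x y ≤ 3) (h2 : IsDistBalanced G 2) {u v : V}
    (heven : Even (G.dist u v)) : G.balanceIndex u = G.balanceIndex v := by
  rcases eq_or_ne u v with rfl | huv
  · rfl
  refine (isBalancedPair_iff_balanceIndex_eq hc hb hdist huv).mp (h2 u v ?_)
  have := hdist u v
  have := hc.pos_dist_of_ne huv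
  rw [Nat.even_iff] at heven
  omega

theorem balanceIndex_eq_of_isDistBalanced_two_three [Finite V] (hc : G.Connected)
    (hb : G.Colorable 2) (hdist : ∀ x y, G.dist x y ≤ 3) (h2 : IsDistBalanced G 2)
    (h3 : IsDistBalanced G 3) {a b : V} (hab : G.dist a b = 3) (u v : V) :
    G.balanceIndex u = G.balanceIndex v := by
  suffices h : ∀ x, G.balanceIndex x = G.balanceIndex a from (h u).trans (h v).symm
  intro x
  have hpar := hc.even_dist_iff_of_colorable_two hb a b x
  rw [hab, iff_false_left (by decide : ¬Even 3)] at hpar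
  by_cases hax : Even (G.dist a x)
  · exact (balanceIndex_eq_of_even_dist hc hb hdist h2 hax).symm
  · have hbx : Even (G.dist b x) := not_not.mp (mt hpar.mpr hax)
    have hba : G.balanceIndex b = G.balanceIndex a :=
      ((isDistBalanced_iff_balanceIndex_eq hc hb hdist three_ne_zero).mp h3 a b hab).symm
    exact (balanceIndex_eq_of_even_dist hc hb hdist h2 hbx).symm.trans hba

end SimpleGraph

theorem statement_14 {V : Type*} [Fintype V] (G : SimpleGraph V) (hc : G.Connected)
    (hdiam : G.diam = 3) (hbip : G.Colorable 2) :
    (IsDistBalanced G 1 → IsDistBalanced G 2 ∧ IsDistBalanced G 3) ∧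
    (IsDistBalanced G 2 ∧ IsDistBalanced G 3 → IsDistBalanced G 1) ∧
    (IsHighlyDistBalanced G ∨
     (IsDistBalanced G 2 ∧ ¬ IsDistBalanced G 1 ∧ ¬ IsDistBalanced G 3) ∨
     (IsDistBalanced G 3 ∧ ¬ IsDistBalanced G 1 ∧ ¬ IsDistBalanced G 2) ∨
     (¬ IsDistBalanced G 1 ∧ ¬ IsDistBalanced G 2 ∧ ¬ IsDistBalanced G 3)) := by
  have hdist (x y : V) : G.dist x y ≤ 3 :=
    hdiam ▸ G.dist_le_diam (G.ediam_ne_top_of_diam_ne_zero (by omega))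
  have : Nonempty V := hc.nonempty
  obtain ⟨a, b, hab⟩ := G.exists_dist_eq_diam
  have of_const (h : ∀ u v, G.balanceIndex u = G.balanceIndex v) (ℓ : ℕ) (hℓ : ℓ ≠ 0) :
      IsDistBalanced G ℓ :=
    (isDistBalanced_iff_balanceIndex_eq hc hbip hdist hℓ).mpr fun u v _ => h u v
  have partA (h1 : IsDistBalanced G 1) : IsDistBalanced G 2 ∧ IsDistBalanced G 3 :=
    have hconst := balanceIndex_eq_of_isDistBalanced_one hc hbip hdist h1
    ⟨of_const hconst 2 two_ne_zero, of_const hconst 3 three_ne_zero⟩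
  have partB (h23 : IsDistBalanced G 2 ∧ IsDistBalanced G 3) : IsDistBalanced G 1 :=
    of_const (balanceIndex_eq_of_isDistBalanced_two_three hc hbip hdist h23.1 h23.2
      (hab.trans hdiam)) 1 one_ne_zero
  have highly (h1 : IsDistBalanced G 1) : IsHighlyDistBalanced G := by
    intro ℓ hℓ hℓD
    rw [hdiam] at hℓD
    interval_cases ℓ
    exacts [h1, (partA h1).1, (partA h1).2]
  refine ⟨partA, partB, ?_⟩
  by_cases h1 : IsDistBalanced G 1
  · exact Or.inl (highly h1)
  · tauto
end

section
/- Let n ≥ 5 be an integer. Then the generalized Petersen graph GP(n,2) is 1-distance-balanced if and only if n ∈ {5, 7, 10}. -/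
open SimpleGraph

/-!
A function `f` with `f s = 0` that grows by at most one along every edge, and that decreases
along some edge at every vertex other than `s`, is `d(s, ·)`. For `5 ≤ n ≤ 10` such functions
are given as tables and all claims are checked by `decide`. For `n ≥ 11` there are closed
formulas for `d(u₀, ·)` and `d(v₀, ·)` in terms of the cyclic norm `m` of the index, and they
show that the edge `u₀v₀` is not balanced: on the outer cycle only `u₋₁, u₀, u₁` are closer to
`u₀`, while every `u_j` with `m ≥ 4` is closer to `v₀`; an inner vertex closer to `u₀` has odd
`m`, and a shift by `±1` injects these into the inner vertices of even `m`, all of which are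
closer to `v₀`.
-/

open Finset

namespace SimpleGraph

variable {V : Type*} (G : SimpleGraph V)

/-- A local certificate that `f = G.dist s`, checkable one vertex at a time. -/
def IsDistCertificate (s : V) (f : V → ℕ) : Prop :=
  f s = 0 ∧ (∀ x y, G.Adj x y → f y ≤ f x + 1) ∧ ∀ x, x ≠ s → ∃ y, G.Adj x y ∧ f y < f x

instance [Fintype V] [DecidableEq V] [DecidableRel G.Adj] (s : V) (f : V → ℕ) :
    Decidable (G.IsDistCertificate s f) :=
  inferInstanceAs (Decidable (_ ∧ _ ∧ _))

variable {G}

lemma le_add_length_of_forall_adj {f : V → ℕ} (hf : ∀ x y, G.Adj x y → f y ≤ f x + 1)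
    {u v : V} (p : G.Walk u v) : f v ≤ f u + p.length := by
  induction p with
  | nil => simp
  | cons h _ ih => have := hf _ _ h; rw [Walk.length_cons]; omega

lemma exists_walk_length_le_of_forall_ne {s : V} {f : V → ℕ}
    (hf : ∀ x, x ≠ s → ∃ y, G.Adj x y ∧ f y < f x) (x : V) :
    ∃ p : G.Walk s x, p.length ≤ f x := by
  induction hx : f x using Nat.strong_induction_on generalizing x with
  | _ k ih =>
    by_cases hxs : x = s
    · subst hxs
      exact ⟨.nil, by simp⟩
    obtain ⟨y, hxy, hlt⟩ := hf x hxs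
    obtain ⟨p, hp⟩ := ih (f y) (hx ▸ hlt) y rfl
    exact ⟨p.concat hxy.symm, by rw [Walk.length_concat]; omega⟩

theorem IsDistCertificate.dist_eq {s : V} {f : V → ℕ} (hf : G.IsDistCertificate s f) (x : V) :
    G.dist s x = f x := by
  obtain ⟨h0, hlip, hdesc⟩ := hf
  obtain ⟨p, hp⟩ := exists_walk_length_le_of_forall_ne hdesc x
  obtain ⟨q, hq⟩ := Reachable.exists_walk_length_eq_dist ⟨p⟩
  have := le_add_length_of_forall_adj hlip q
  have := G.dist_le p
  omega

variable [Fintype V]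

lemma isBalancedPair_iff_of_dist_eq {u v : V} {f g : V → ℕ} (hf : ∀ x, G.dist u x = f x)
    (hg : ∀ x, G.dist v x = g x) :
    IsBalancedPair G u v ↔ #{w | f w < g w} = #{w | g w < f w} := by
  simp [IsBalancedPair, wSet, hf, hg, ← Set.ncard_coe_finset]

theorem isDistBalanced_one_of_isDistCertificate (D : V → V → ℕ)
    (hD : ∀ s, G.IsDistCertificate s (D s))
    (hbal : ∀ u v, G.Adj u v → #{w | D u w < D v w} = #{w | D v w < D u w}) :
    IsDistBalanced G 1 := fun u v huv =>
  (isBalancedPair_iff_of_dist_eq (hD u).dist_eq (hD v).dist_eq).mpr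
    (hbal u v (dist_eq_one_iff_adj.mp huv))

theorem not_isDistBalanced_one_of_isDistCertificate {u v : V} (huv : G.Adj u v) {f g : V → ℕ}
    (hf : G.IsDistCertificate u f) (hg : G.IsDistCertificate v g)
    (hne : #{w | f w < g w} ≠ #{w | g w < f w}) : ¬ IsDistBalanced G 1 := fun h =>
  hne <| (isBalancedPair_iff_of_dist_eq hf.dist_eq hg.dist_eq).mp <|
    h u v (dist_eq_one_iff_adj.mpr huv)

end SimpleGraph

namespace ZMod

lemma natCast_ne_zero_of_lt {a n : ℕ} (ha : a ≠ 0) (h : a < n) : (a : ZMod n) ≠ 0 := by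
  rw [Ne, natCast_eq_zero_iff]
  exact Nat.not_dvd_of_pos_of_lt (Nat.pos_of_ne_zero ha) h

variable {n : ℕ} [NeZero n]

lemma val_add_eq_ite (a b : ZMod n) :
    (a + b).val = if a.val + b.val < n then a.val + b.val else a.val + b.val - n := by
  split_ifs with h
  · exact val_add_of_lt h
  · exact val_add_of_le (by omega)

lemma val_sub_eq_ite (a b : ZMod n) :
    (a - b).val = if b.val ≤ a.val then a.val - b.val else a.val + n - b.val := by
  have h := val_add_eq_ite (a - b) b
  rw [sub_add_cancel] at h
  have := (a - b).val_lt
  split_ifs at h ⊢ <;> omega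

end ZMod

lemma ne_and_or_eq_add_iff {G : Type*} [AddGroup G] {a : G} (ha : a ≠ 0) {i j : G} :
    i ≠ j ∧ (j = i + a ∨ i = j + a) ↔ j = i + a ∨ j = i - a := by
  rw [eq_sub_iff_add_eq, eq_comm (a := j + a)]
  refine ⟨And.right, fun h => ⟨?_, h⟩⟩
  rintro rfl
  rcases h with h | h <;> exact ha (by simpa using h)

namespace GP

variable {n k : ℕ}

instance : DecidableRel (GP n k).Adj
  | .inl i, .inl j => decidable_of_iff (i ≠ j ∧ (j = i + 1 ∨ i = j + 1)) (by simp [GP])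
  | .inr i, .inr j => decidable_of_iff (i ≠ j ∧ (j = i + k ∨ i = j + k)) (by simp [GP])
  | .inl i, .inr j => decidable_of_iff (i = j) (by simp [GP])
  | .inr i, .inl j => decidable_of_iff (i = j) (by simp [GP, eq_comm])

lemma adj_inl_iff (h1 : (1 : ZMod n) ≠ 0) {i : ZMod n} {y : ZMod n ⊕ ZMod n} :
    (GP n k).Adj (.inl i) y ↔ y = .inl (i + 1) ∨ y = .inl (i - 1) ∨ y = .inr i := by
  rcases y with j | j
  · simpa [GP] using ne_and_or_eq_add_iff h1
  · simp [GP, eq_comm]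

lemma adj_inr_iff (hk : (k : ZMod n) ≠ 0) {i : ZMod n} {y : ZMod n ⊕ ZMod n} :
    (GP n k).Adj (.inr i) y ↔ y = .inr (i + k) ∨ y = .inr (i - k) ∨ y = .inl i := by
  rcases y with j | j
  · simp [GP]
  · simpa [GP] using ne_and_or_eq_add_iff hk

lemma forall_adj_iff (h1 : (1 : ZMod n) ≠ 0) (hk : (k : ZMod n) ≠ 0)
    {P : ZMod n ⊕ ZMod n → ZMod n ⊕ ZMod n → Prop} :
    (∀ x y, (GP n k).Adj x y → P x y) ↔ ∀ i,
      (P (.inl i) (.inl (i + 1)) ∧ P (.inl i) (.inl (i - 1)) ∧ P (.inl i) (.inr i)) ∧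
      (P (.inr i) (.inr (i + k)) ∧ P (.inr i) (.inr (i - k)) ∧ P (.inr i) (.inl i)) := by
  rw [Sum.forall]
  simp only [adj_inl_iff h1, adj_inr_iff hk, or_imp, forall_and, forall_eq]

lemma exists_adj_inl_iff (h1 : (1 : ZMod n) ≠ 0) {Q : ZMod n ⊕ ZMod n → Prop} {i : ZMod n} :
    (∃ y, (GP n k).Adj (.inl i) y ∧ Q y) ↔ Q (.inl (i + 1)) ∨ Q (.inl (i - 1)) ∨ Q (.inr i) := by
  simp only [adj_inl_iff h1, or_and_right, exists_or, exists_eq_left]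

lemma exists_adj_inr_iff (hk : (k : ZMod n) ≠ 0) {Q : ZMod n ⊕ ZMod n → Prop} {i : ZMod n} :
    (∃ y, (GP n k).Adj (.inr i) y ∧ Q y) ↔ Q (.inr (i + k)) ∨ Q (.inr (i - k)) ∨ Q (.inl i) := by
  simp only [adj_inr_iff hk, or_and_right, exists_or, exists_eq_left]

end GP

/-- A rotation-invariant table of candidate distances in `GP(n,k)`: `d(u_i, u_j) = Luu[j - i]`,
`d(u_i, v_j) = d(v_j, u_i) = Luv[j - i]` and `d(v_i, v_j) = Lvv[j - i]`. -/
def rotTable (n : ℕ) (Luu Luv Lvv : List ℕ) : ZMod n ⊕ ZMod n → ZMod n ⊕ ZMod n → ℕ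
  | .inl i, .inl j => Luu.getD (j - i).val 0
  | .inl i, .inr j => Luv.getD (j - i).val 0
  | .inr i, .inl j => Luv.getD (i - j).val 0
  | .inr i, .inr j => Lvv.getD (j - i).val 0

lemma isDistBalanced_GP_five_two : IsDistBalanced (GP 5 2) 1 :=
  isDistBalanced_one_of_isDistCertificate
    (rotTable 5 [0, 1, 2, 2, 1] [1, 2, 2, 2, 2] [0, 2, 1, 1, 2])
    (by decide) (by decide)

lemma isDistBalanced_GP_seven_two : IsDistBalanced (GP 7 2) 1 :=
  isDistBalanced_one_of_isDistCertificate
    (rotTable 7 [0, 1, 2, 3, 3, 2, 1] [1, 2, 2, 3, 3, 2, 2] [0, 3, 1, 2, 2, 1, 3])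
    (by decide) (by decide)

lemma isDistBalanced_GP_ten_two : IsDistBalanced (GP 10 2) 1 :=
  isDistBalanced_one_of_isDistCertificate
    (rotTable 10 [0, 1, 2, 3, 4, 5, 4, 3, 2, 1] [1, 2, 2, 3, 3, 4, 3, 3, 2, 2]
      [0, 3, 1, 4, 2, 5, 2, 4, 1, 3])
    (by decide) (by decide)

lemma not_isDistBalanced_GP_of_rotTable (n : ℕ) [NeZero n] (Luu Luv Lvv : List ℕ)
    (hu : (GP n 2).IsDistCertificate (.inl 0) (rotTable n Luu Luv Lvv (.inl 0)))
    (hv : (GP n 2).IsDistCertificate (.inr 0) (rotTable n Luu Luv Lvv (.inr 0)))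
    (hne : #{w | rotTable n Luu Luv Lvv (.inl 0) w < rotTable n Luu Luv Lvv (.inr 0) w} ≠
      #{w | rotTable n Luu Luv Lvv (.inr 0) w < rotTable n Luu Luv Lvv (.inl 0) w}) :
    ¬ IsDistBalanced (GP n 2) 1 :=
  not_isDistBalanced_one_of_isDistCertificate (by simp [GP]) hu hv hne

lemma not_isDistBalanced_GP_six_two : ¬ IsDistBalanced (GP 6 2) 1 :=
  not_isDistBalanced_GP_of_rotTable 6 [0, 1, 2, 3, 2, 1] [1, 2, 2, 3, 2, 2] [0, 3, 1, 4, 1, 3]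
    (by decide) (by decide) (by decide)

lemma not_isDistBalanced_GP_eight_two : ¬ IsDistBalanced (GP 8 2) 1 :=
  not_isDistBalanced_GP_of_rotTable 8 [0, 1, 2, 3, 4, 3, 2, 1] [1, 2, 2, 3, 3, 3, 2, 2]
    [0, 3, 1, 4, 2, 4, 1, 3] (by decide) (by decide) (by decide)

lemma not_isDistBalanced_GP_nine_two : ¬ IsDistBalanced (GP 9 2) 1 :=
  not_isDistBalanced_GP_of_rotTable 9 [0, 1, 2, 3, 4, 4, 3, 2, 1] [1, 2, 2, 3, 3, 3, 3, 2, 2]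
    [0, 3, 1, 3, 2, 2, 3, 1, 3] (by decide) (by decide) (by decide)

/-- Reducible, so that `simp` can unfold it inside the conditions of decidable `if`s. -/
abbrev cycNorm {n : ℕ} (j : ZMod n) : ℕ := min j.val (n - j.val)

lemma card_filter_cycNorm_le {n : ℕ} [NeZero n] (r : ℕ) :
    #{j : ZMod n | cycNorm j ≤ r} ≤ 2 * r + 1 := by
  calc #{j : ZMod n | cycNorm j ≤ r}
      ≤ #((range (2 * r + 1)).image fun i : ℕ => (i : ZMod n) - r) := card_le_card ?_
    _ ≤ 2 * r + 1 := card_image_le.trans (card_range _).le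
  intro j hj
  simp only [mem_filter, mem_univ, true_and, mem_image, mem_range] at hj ⊢
  have := j.val_lt
  unfold cycNorm at hj
  by_cases h : j.val ≤ r
  · exact ⟨j.val + r, by omega, by simp⟩
  · refine ⟨j.val + r - n, by omega, ?_⟩
    rw [Nat.cast_sub (by omega)]
    simp

/-- `j ↦ j ± 1`, according to the parity of `j.val`, flips the parity of `cycNorm j`, except at
`2 * cycNorm j + 1 = n`. -/
lemma card_filter_cycNorm_odd_le {n : ℕ} [NeZero n] :
    #{j : ZMod n | cycNorm j % 2 = 1 ∧ 2 * cycNorm j + 1 ≠ n} ≤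
      #{j : ZMod n | cycNorm j % 2 = 0} := by
  have h1 : n ≤ 1 ∨ (1 : ZMod n).val = 1 := by
    rcases le_or_gt n 1 with h | h
    · exact .inl h
    · exact .inr (by simpa using ZMod.val_natCast_of_lt h)
  refine card_le_card_of_injOn (fun j => if j.val % 2 = 1 then j + 1 else j - 1) ?_ ?_
  · intro j hj
    have := j.val_lt
    simp only [mem_coe, mem_filter, mem_univ, true_and] at hj ⊢
    unfold cycNorm at hj ⊢
    split_ifs <;> simp only [ZMod.val_add_eq_ite, ZMod.val_sub_eq_ite] <;> split_ifs <;> omega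
  · intro a ha b hb hab
    have := a.val_lt
    have := b.val_lt
    simp only [mem_coe, mem_filter, mem_univ, true_and] at ha hb
    unfold cycNorm at ha hb
    apply ZMod.val_injective
    have hv := congrArg ZMod.val hab
    simp only at hv
    split_ifs at hv <;> simp only [ZMod.val_add_eq_ite, ZMod.val_sub_eq_ite] at hv <;>
      split_ifs at hv <;> omega

/- For `m = cycNorm j`: `u₀` reaches `u_j` along the outer cycle, or through `v₀` and about `m / 2`
inner steps; `v₀` reaches `v_j` in `m / 2` inner steps when `m` is even, and otherwise through a
spoke or, for odd `n`, the long way round the inner cycle. -/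
def distU₀ (n : ℕ) : ZMod n ⊕ ZMod n → ℕ
  | .inl j => min (cycNorm j) ((cycNorm j + 5) / 2)
  | .inr j => (cycNorm j + 3) / 2

def distV₀ (n : ℕ) : ZMod n ⊕ ZMod n → ℕ
  | .inl j => (cycNorm j + 3) / 2
  | .inr j =>
      if cycNorm j % 2 = 0 then cycNorm j / 2
      else if n % 2 = 1 then min ((n - cycNorm j) / 2) ((cycNorm j + 5) / 2)
      else (cycNorm j + 5) / 2

lemma isDistCertificate_distU₀ {n : ℕ} (hn : 11 ≤ n) :
    (GP n 2).IsDistCertificate (.inl 0) (distU₀ n) := by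
  have : NeZero n := ⟨by omega⟩
  have h1 := ZMod.val_natCast_of_lt (show 1 < n by omega)
  have h2 := ZMod.val_natCast_of_lt (show 2 < n by omega)
  have h1' := ZMod.natCast_ne_zero_of_lt one_ne_zero (show 1 < n by omega)
  have h2' := ZMod.natCast_ne_zero_of_lt two_ne_zero (show 2 < n by omega)
  push_cast at h1 h1'
  refine ⟨by simp [distU₀], (GP.forall_adj_iff h1' h2').mpr fun i => ?_, ?_⟩
  · have := i.val_lt
    simp only [distU₀, cycNorm, ZMod.val_add_eq_ite, ZMod.val_sub_eq_ite, h1, h2]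
    refine ⟨⟨?_, ?_, ?_⟩, ?_, ?_, ?_⟩ <;> (try split_ifs) <;> omega
  · rintro (i | i) hi <;> have := i.val_lt
    · replace hi : i.val ≠ 0 := fun h => hi (by rw [(ZMod.val_eq_zero i).mp h])
      rw [GP.exists_adj_inl_iff h1']
      simp only [distU₀, cycNorm, ZMod.val_add_eq_ite, ZMod.val_sub_eq_ite, h1]
      split_ifs <;> omega
    · rw [GP.exists_adj_inr_iff h2']
      simp only [distU₀, cycNorm, ZMod.val_add_eq_ite, ZMod.val_sub_eq_ite, h2]
      split_ifs <;> omega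

lemma exists_adj_distV₀_lt_inr {n : ℕ} (hn : 11 ≤ n) {i : ZMod n} (hi : i ≠ 0) :
    ∃ y, (GP n 2).Adj (.inr i) y ∧ distV₀ n y < distV₀ n (.inr i) := by
  have : NeZero n := ⟨by omega⟩
  have h2 := ZMod.val_natCast_of_lt (show 2 < n by omega)
  rw [GP.exists_adj_inr_iff (ZMod.natCast_ne_zero_of_lt two_ne_zero (by omega))]
  have := i.val_lt
  have hi : i.val ≠ 0 := (ZMod.val_ne_zero i).mpr hi
  have hm : cycNorm i = min i.val (n - i.val) := rfl
  -- even `cycNorm i`: step towards `v₀`; odd: the spoke, unless the long way round is shorter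
  by_cases heven : cycNorm i % 2 = 0
  · rcases le_or_gt (2 * i.val) n with hs | hs
    · refine .inr (.inl ?_)
      simp only [distV₀, cycNorm, ZMod.val_sub_eq_ite, h2]
      split_ifs <;> omega
    · refine .inl ?_
      simp only [distV₀, cycNorm, ZMod.val_add_eq_ite, h2]
      split_ifs <;> omega
  by_cases hlong : n % 2 = 1 ∧ (n - cycNorm i) / 2 < (cycNorm i + 5) / 2
  · rcases le_or_gt (2 * i.val) n with hs | hs
    · refine .inl ?_
      simp only [distV₀, cycNorm, ZMod.val_add_eq_ite, h2]
      split_ifs <;> omega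
    · refine .inr (.inl ?_)
      simp only [distV₀, cycNorm, ZMod.val_sub_eq_ite, h2]
      split_ifs <;> omega
  · refine .inr (.inr ?_)
    simp only [distV₀, cycNorm]
    split_ifs <;> omega

lemma isDistCertificate_distV₀ {n : ℕ} (hn : 11 ≤ n) :
    (GP n 2).IsDistCertificate (.inr 0) (distV₀ n) := by
  have : NeZero n := ⟨by omega⟩
  have h1 := ZMod.val_natCast_of_lt (show 1 < n by omega)
  have h2 := ZMod.val_natCast_of_lt (show 2 < n by omega)
  have h1' := ZMod.natCast_ne_zero_of_lt one_ne_zero (show 1 < n by omega)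
  have h2' := ZMod.natCast_ne_zero_of_lt two_ne_zero (show 2 < n by omega)
  push_cast at h1 h1'
  refine ⟨by simp [distV₀], (GP.forall_adj_iff h1' h2').mpr fun i => ?_, ?_⟩
  · have := i.val_lt
    simp only [distV₀, cycNorm, ZMod.val_add_eq_ite, ZMod.val_sub_eq_ite, h1, h2]
    refine ⟨⟨?_, ?_, ?_⟩, ?_, ?_, ?_⟩ <;> (try split_ifs) <;> omega
  · rintro (i | i) hi
    · have := i.val_lt
      rw [GP.exists_adj_inl_iff h1']
      simp only [distV₀, cycNorm, ZMod.val_add_eq_ite, ZMod.val_sub_eq_ite, h1]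
      split_ifs <;> omega
    · exact exists_adj_distV₀_lt_inr hn (fun h => hi (by rw [h]))

lemma card_filter_distU₀_lt_distV₀ {n : ℕ} [NeZero n] (hn : 11 ≤ n) :
    #{w | distU₀ n w < distV₀ n w} < #{w | distV₀ n w < distU₀ n w} := by
  set W : Finset (ZMod n ⊕ ZMod n) := {w | distU₀ n w < distV₀ n w}
  set W' : Finset (ZMod n ⊕ ZMod n) := {w | distV₀ n w < distU₀ n w}
  have hW : #W.toLeft ≤ 3 := by
    refine (card_le_card fun j hj => ?_).trans (card_filter_cycNorm_le 1)
    simp only [W, mem_toLeft, mem_filter, mem_univ, true_and] at hj ⊢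
    simp only [distU₀, distV₀] at hj
    omega
  have hW' : n ≤ #W'.toLeft + 7 := calc
    n = #(univ : Finset (ZMod n)) := (ZMod.card n).symm
    _ ≤ #(W'.toLeft ∪ ({j | cycNorm j ≤ 3} : Finset (ZMod n))) := card_le_card fun j _ => by
      simp only [W', mem_union, mem_toLeft, mem_filter, mem_univ, true_and]
      simp only [distU₀, distV₀]
      omega
    _ ≤ #W'.toLeft + 7 := (card_union_le _ _).trans (by grw [card_filter_cycNorm_le 3])
  have hWW' : #W.toRight ≤ #W'.toRight := calc
    #W.toRight ≤ #{j : ZMod n | cycNorm j % 2 = 1 ∧ 2 * cycNorm j + 1 ≠ n} :=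
      card_le_card fun j hj => by
        simp only [W, mem_toRight, mem_filter, mem_univ, true_and] at hj ⊢
        have := j.val_lt
        simp only [distU₀, distV₀, cycNorm] at hj ⊢
        split_ifs at hj <;> omega
    _ ≤ #{j : ZMod n | cycNorm j % 2 = 0} := card_filter_cycNorm_odd_le
    _ ≤ #W'.toRight := card_le_card fun j hj => by
        simp only [W', mem_toRight, mem_filter, mem_univ, true_and] at hj ⊢
        simp only [distU₀, distV₀]
        split_ifs
        omega
  rw [← card_toLeft_add_card_toRight (u := W), ← card_toLeft_add_card_toRight (u := W')]
  omega

lemma not_isDistBalanced_GP_two_of_eleven_le {n : ℕ} (hn : 11 ≤ n) :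
    ¬ IsDistBalanced (GP n 2) 1 := by
  have : NeZero n := ⟨by omega⟩
  exact not_isDistBalanced_one_of_isDistCertificate (by simp [GP]) (isDistCertificate_distU₀ hn)
    (isDistCertificate_distV₀ hn) (card_filter_distU₀_lt_distV₀ hn).ne

theorem statement_17 (n : ℕ) (hn : 5 ≤ n) :
    IsDistBalanced (GP n 2) 1 ↔ n = 5 ∨ n = 7 ∨ n = 10 := by
  constructor
  · intro h
    by_contra hn'
    obtain rfl | rfl | rfl | hn : n = 6 ∨ n = 8 ∨ n = 9 ∨ 11 ≤ n := by omega
    exacts [not_isDistBalanced_GP_six_two h, not_isDistBalanced_GP_eight_two h,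
      not_isDistBalanced_GP_nine_two h, not_isDistBalanced_GP_two_of_eleven_le hn h]
  · rintro (rfl | rfl | rfl)
    exacts [isDistBalanced_GP_five_two, isDistBalanced_GP_seven_two, isDistBalanced_GP_ten_two]
end
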